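/- arXiv:nlin/0208035 — 7 statements merged into one kernel-verified Lean document; each statement's English description precedes it below -/
import Mathlib

section
/- The cyclic functions satisfy the inversion relation W_p(n) · W_{Op}(-n) · Φ(n) = 1 for all integers n, where Φ(n) = (-1)^n ω^{n²/2} and Op = (ω^{-1}x^{-1}, ω^{-1/2}x^{-1}y). -/
/-- Inversion relation for the cyclic weights: `W_p(n) · W_{Op}(-n) · Φ(n) = 1`
for all `n ∈ ℤ`, where `Φ(n) = (-1)^n ω^{n²/2}`, `ω = e^{2πi/N}`,
`ω^{1/2} = e^{πi/N}`, and `Op = (ω⁻¹x⁻¹, ω^{-1/2}x⁻¹y)`. -/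
theorem cyclic_weight_inversion (N : ℕ) (hN : 2 ≤ N) (x y : ℂ)
    (hferm : x ^ N + y ^ N = 1) (hx0 : x ≠ 0) (hy0 : y ≠ 0)
    (hx : ∀ n : ℤ, 1 - Complex.exp (2 * Real.pi * Complex.I / N) ^ n * x ≠ 0)
    (hx' : ∀ n : ℤ, 1 - Complex.exp (2 * Real.pi * Complex.I / N) ^ n
        * ((Complex.exp (2 * Real.pi * Complex.I / N))⁻¹ * x⁻¹) ≠ 0)
    (W W' : ℤ → ℂ) (hW0 : W 0 = 1) (hW'0 : W' 0 = 1)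
    (hWrec : ∀ n : ℤ,
      W n = W (n - 1) * (y / (1 - Complex.exp (2 * Real.pi * Complex.I / N) ^ n * x)))
    (hW'rec : ∀ n : ℤ,
      W' n = W' (n - 1) * ((Complex.exp (Real.pi * Complex.I / N))⁻¹ * x⁻¹ * y /
        (1 - Complex.exp (2 * Real.pi * Complex.I / N) ^ n
          * ((Complex.exp (2 * Real.pi * Complex.I / N))⁻¹ * x⁻¹)))) :
    ∀ n : ℤ, W n * W' (-n)
      * ((-1 : ℂ) ^ n * Complex.exp (Real.pi * Complex.I / N) ^ (n ^ 2)) = 1 := by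
  set σ : ℂ := Complex.exp (Real.pi * Complex.I / N) with hσ
  set ω : ℂ := Complex.exp (2 * Real.pi * Complex.I / N) with hω
  have hσ0 : σ ≠ 0 := Complex.exp_ne_zero _
  have hω0 : ω ≠ 0 := Complex.exp_ne_zero _
  have hωσ : ω = σ ^ 2 := by
    rw [hσ, hω, ← Complex.exp_nat_mul]; ring_nf
  -- step lemma
  have step : ∀ n : ℤ, W (n+1) * W' (-(n+1)) * ((-1 : ℂ) ^ (n+1) * σ ^ ((n+1) ^ 2))
      = W n * W' (-n) * ((-1 : ℂ) ^ n * σ ^ (n ^ 2)) := by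
    intro n
    have h1 := hWrec (n+1)
    have h2 := hW'rec (-n)
    simp only [add_sub_cancel_right] at h1
    have hn2 : -n - 1 = -(n+1) := by ring
    rw [hn2] at h2
    rw [h1, h2]
    have key : (y / (1 - ω ^ (n+1) * x)) * ((-1 : ℂ) ^ (n+1) * σ ^ ((n+1) ^ 2))
        = (σ⁻¹ * x⁻¹ * y / (1 - ω ^ (-n) * (ω⁻¹ * x⁻¹))) * ((-1 : ℂ) ^ n * σ ^ (n ^ 2)) := by
      have d1 := hx (n+1)
      have d2 := hx' (-n)
      have hu0 : ω ^ (n+1) ≠ 0 := zpow_ne_zero _ hω0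
      have hB0 : σ ^ (2*n : ℤ) ≠ 0 := zpow_ne_zero _ hσ0
      have ha : ω ^ (-n) * (ω⁻¹ * x⁻¹) = (ω ^ (n+1))⁻¹ * x⁻¹ := by
        rw [← mul_assoc, ← zpow_neg_one, ← zpow_add₀ hω0,
          show (-n + -1 : ℤ) = -(n+1) by ring, zpow_neg]
      have e1 : (-1 : ℂ) ^ (n+1) = -((-1:ℂ) ^ n) := by
        rw [zpow_add₀ (by norm_num : (-1:ℂ) ≠ 0)]; simp
      have e2 : σ ^ ((n+1)^2) = σ ^ (n^2) * σ ^ (2*n) * σ := by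
        rw [show ((n+1)^2 : ℤ) = n^2 + 2*n + 1 by ring, zpow_add₀ hσ0, zpow_add₀ hσ0,
          zpow_one]
      have e4 : ω ^ (n+1) = σ ^ (2*n : ℤ) * (σ * σ) := by
        rw [hωσ, ← zpow_natCast σ 2, ← zpow_mul,
          show ((2:ℕ) : ℤ) * (n+1) = 2*n + 1 + 1 by push_cast; ring,
          zpow_add₀ hσ0, zpow_add₀ hσ0, zpow_one]
        ring
      rw [ha] at d2 ⊢
      rw [e4] at d1 d2
      rw [e1, e2, e4]
      have hfac : 1 - (σ ^ (2*n : ℤ) * (σ * σ))⁻¹ * x⁻¹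
          = -((σ ^ (2*n : ℤ) * (σ * σ))⁻¹ * x⁻¹) * (1 - σ ^ (2*n : ℤ) * (σ * σ) * x) := by
        field_simp
        ring
      rw [hfac]
      have hD : σ ^ (2*n : ℤ) * σ ^ 3 * x ^ 2 - σ * x ≠ 0 := by
        have hh : σ ^ (2*n : ℤ) * σ ^ 3 * x ^ 2 - σ * x
            = -(σ * x) * (1 - σ ^ (2*n : ℤ) * (σ * σ) * x) := by ring
        rw [hh]
        exact mul_ne_zero (neg_ne_zero.2 (mul_ne_zero hσ0 hx0)) d1
      have hD' : σ ^ (n * 2 : ℤ) * σ ^ 3 * x ^ 2 - σ * x ≠ 0 := by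
        rw [show (n * 2 : ℤ) = 2 * n by ring]; exact hD
      field_simp [d1]
    linear_combination (W n * W' (-(n+1))) * key
  intro n
  induction n using Int.induction_on with
  | zero => simp [hW0, hW'0]
  | succ k ih =>
    have := step k
    rw [this]; exact ih
  | pred k ih =>
    have h := step (-k-1)
    have e : (-k - 1 + 1 : ℤ) = -k := by ring
    rw [e] at h
    rw [← h]
    simpa using ih
end

section
/- The special value V(ω^{-1}) = ∏_{n=1}^{N-1} (1 - ω^n)^n equals N^{N/2} e^{iπ(N-1)(N-2)/12}. -/
open Finset

private lemma sumC1 (N : ℕ) : ∑ n ∈ Finset.range N, (n:ℂ) = N*(N-1)/2 := by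
  induction N with
  | zero => simp
  | succ k ih => rw [Finset.sum_range_succ, ih]; push_cast; ring

private lemma sumC2 (N : ℕ) : ∑ n ∈ Finset.range N, (n:ℂ)^2 = N*(N-1)*(2*N-1)/6 := by
  induction N with
  | zero => simp
  | succ k ih => rw [Finset.sum_range_succ, ih]; push_cast; ring

private lemma gen_factor (θ : ℂ) : 1 - Complex.exp (2*θ*Complex.I)
    = 2 * Complex.sin θ * (Complex.exp (θ*Complex.I) * (-Complex.I)) := by
  rw [Complex.sin]
  have h1 : Complex.exp (-θ*Complex.I) * Complex.exp (θ*Complex.I) = 1 := by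
    rw [← Complex.exp_add]; ring_nf; exact Complex.exp_zero
  have h2 : Complex.exp (θ*Complex.I) * Complex.exp (θ*Complex.I) = Complex.exp (2*θ*Complex.I) := by
    rw [← Complex.exp_add]; ring_nf
  linear_combination (Complex.exp (-θ*Complex.I) - Complex.exp (θ*Complex.I)) * Complex.exp (θ*Complex.I) * Complex.I_sq - h1 + h2

private lemma exp_pi_div_two_mul_I : Complex.exp ((Real.pi:ℂ)/2 * Complex.I) = Complex.I := by
  rw [Complex.exp_mul_I, show ((Real.pi:ℂ)/2) = ((Real.pi/2 : ℝ):ℂ) by push_cast; ring,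
    ← Complex.ofReal_cos, ← Complex.ofReal_sin, Real.cos_pi_div_two, Real.sin_pi_div_two]
  simp

/-- The special value `V(ω⁻¹) = ∏_{n=1}^{N-1} (1 - ω^n)^n = N^{N/2} e^{iπ(N-1)(N-2)/12}`
for `ω = e^{2πi/N}`. -/
theorem V_at_omega_inv (N : ℕ) (hN : 2 ≤ N) :
    ∏ n ∈ Finset.Ico 1 N, (1 - Complex.exp (2 * Real.pi * Complex.I / N) ^ n) ^ n
      = (N : ℂ) ^ ((N : ℂ) / 2)
        * Complex.exp (Complex.I * Real.pi * ((N : ℂ) - 1) * ((N : ℂ) - 2) / 12) := by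
  have hNpos : 0 < N := by omega
  have hN0 : (N:ℂ) ≠ 0 := by exact_mod_cast (by omega : N ≠ 0)
  set ω := Complex.exp (2 * Real.pi * Complex.I / N) with hωdef
  -- the factorization
  have hfac : ∀ n : ℕ, (1:ℂ) - ω ^ n
      = ((2 * Real.sin (Real.pi * n / N) : ℝ) : ℂ)
        * Complex.exp (((Real.pi * n / N - Real.pi / 2 : ℝ) : ℂ) * Complex.I) := by
    intro n
    have hθ : ω ^ n = Complex.exp (2 * ((Real.pi * n / N : ℝ) : ℂ) * Complex.I) := by
      rw [hωdef, ← Complex.exp_nat_mul]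
      congr 1
      push_cast
      field_simp
    have hph : Complex.exp (((Real.pi * n / N - Real.pi / 2 : ℝ) : ℂ) * Complex.I)
        = Complex.exp (((Real.pi * n / N : ℝ):ℂ) * Complex.I) * (-Complex.I) := by
      push_cast
      rw [sub_mul, Complex.exp_sub, exp_pi_div_two_mul_I, div_eq_mul_inv, Complex.inv_I]
    rw [hθ, gen_factor, hph]
    push_cast [Complex.ofReal_sin]
    ring
  -- step A : ∏ (1 - ω^n) = N
  have : NeZero N := ⟨by omega⟩
  have hω : IsPrimitiveRoot ω N := Complex.isPrimitiveRoot_exp N (by omega)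
  have hA : ∏ n ∈ Finset.Ico 1 N, ((1:ℂ) - ω ^ n) = N := by
    have key : ∀ x : ℂ, ∏ n ∈ Finset.range N, (x - ω ^ n) = x ^ N - 1 := by
      intro x
      have h := hω.pow_sub_pow_eq_prod_sub_mul x 1 hNpos
      simp only [one_pow, mul_one] at h
      rw [h]
      refine Finset.prod_nbij (fun n => ω ^ n) (fun n _ => ?_) (fun a ha b hb hab => ?_)
        (fun ζ hζ => ?_) (fun _ _ => rfl)
      · rw [Polynomial.mem_nthRootsFinset hNpos, ← pow_mul, mul_comm, pow_mul, hω.pow_eq_one,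
          one_pow]
      · simp only [Finset.coe_range, Set.mem_Iio] at ha hb
        exact hω.pow_inj ha hb hab
      · rw [Finset.coe_range]
        rw [Finset.mem_coe, Polynomial.mem_nthRootsFinset hNpos] at hζ
        obtain ⟨i, hi, hie⟩ := hω.eq_pow_of_pow_eq_one hζ
        exact ⟨i, hi, hie⟩
    have h1 : ∀ x : ℂ, (x - 1) * ∏ n ∈ Finset.Ico 1 N, (x - ω ^ n) = x ^ N - 1 := by
      intro x
      rw [← key x, Finset.range_eq_Ico, Finset.prod_eq_prod_Ico_succ_bot hNpos]
      simp [mul_comm]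
    have h3 : (fun x : ℂ => ∏ n ∈ Finset.Ico 1 N, (x - ω ^ n))
        = (fun x : ℂ => ∑ k ∈ Finset.range N, x ^ k) := by
      apply Continuous.ext_on (dense_compl_singleton (1:ℂ)) (by continuity) (by continuity)
      intro x hx
      have hx1 : x - 1 ≠ 0 := sub_ne_zero.2 hx
      apply mul_left_cancel₀ hx1
      rw [h1 x, ← geom_sum_mul]; ring
    have h4 := congrFun h3 1
    rw [h4]; simp
  -- Ico sums
  have e1 : ∑ n ∈ Finset.Ico 1 N, (n:ℂ) = N*(N-1)/2 := by
    have h := sumC1 N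
    rw [Finset.range_eq_Ico, Finset.sum_eq_sum_Ico_succ_bot hNpos] at h
    simpa using h
  have e2 : ∑ n ∈ Finset.Ico 1 N, (n:ℂ)^2 = N*(N-1)*(2*N-1)/6 := by
    have h := sumC2 N
    rw [Finset.range_eq_Ico, Finset.sum_eq_sum_Ico_succ_bot hNpos] at h
    simpa using h
  -- hQ : ∏ 2 sin = N (real)
  have hQ : ∏ n ∈ Finset.Ico 1 N, (2 * Real.sin (Real.pi * n / N)) = N := by
    have hsplit : ∏ n ∈ Finset.Ico 1 N, ((1:ℂ) - ω ^ n)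
        = ((∏ n ∈ Finset.Ico 1 N, (2 * Real.sin (Real.pi * n / N)) : ℝ) : ℂ)
          * Complex.exp (∑ n ∈ Finset.Ico 1 N,
              ((Real.pi * n / N - Real.pi / 2 : ℝ) : ℂ) * Complex.I) := by
      rw [Finset.prod_congr rfl fun n _ => hfac n, Finset.prod_mul_distrib, Complex.exp_sum,
        Complex.ofReal_prod]
    have hzero : ∑ n ∈ Finset.Ico 1 N,
        ((Real.pi * n / N - Real.pi / 2 : ℝ) : ℂ) * Complex.I = 0 := by
      have : ∀ n : ℕ, ((Real.pi * n / N - Real.pi / 2 : ℝ) : ℂ) * Complex.I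
          = ((Real.pi:ℂ) * Complex.I / N) * (n:ℂ) - ((Real.pi:ℂ) * Complex.I / 2) := by
        intro n; push_cast; ring
      rw [Finset.sum_congr rfl fun n _ => this n, Finset.sum_sub_distrib, ← Finset.mul_sum, e1,
        Finset.sum_const, Nat.card_Ico]
      have hc : ((N - 1 : ℕ) : ℂ) = (N:ℂ) - 1 := by
        push_cast [Nat.cast_sub (by omega : 1 ≤ N)]; ring
      rw [nsmul_eq_mul, hc]
      field_simp
      ring
    rw [hsplit, hzero, Complex.exp_zero, mul_one] at hA
    exact_mod_cast hA
  have hP : ∏ n ∈ Finset.Ico 1 N, (2 * Real.sin (Real.pi * n / N)) ^ n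
      = (N : ℝ) ^ ((N : ℝ)/2) := by
    set s : ℕ → ℝ := fun n => 2 * Real.sin (Real.pi * n / N) with hs
    have hpos : ∀ n ∈ Finset.Ico 1 N, 0 < s n := by
      intro n hn
      rw [Finset.mem_Ico] at hn
      have h1 : 0 < Real.pi * n / N := by
        apply div_pos (mul_pos Real.pi_pos (by exact_mod_cast Nat.pos_of_ne_zero (by omega)))
        exact_mod_cast (by omega : 0 < N)
      have h2 : Real.pi * n / N < Real.pi := by
        rw [div_lt_iff₀ (by exact_mod_cast (by omega : 0 < N))]
        have : (n:ℝ) < N := by exact_mod_cast hn.2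
        nlinarith [Real.pi_pos]
      exact mul_pos two_pos (Real.sin_pos_of_pos_of_lt_pi h1 h2)
    have hrefl : ∏ n ∈ Finset.Ico 1 N, s n ^ n = ∏ n ∈ Finset.Ico 1 N, s n ^ (N - n) := by
      refine Finset.prod_nbij' (fun n => N - n) (fun n => N - n) ?_ ?_ ?_ ?_ ?_
      · intro a ha; rw [Finset.mem_Ico] at *; omega
      · intro a ha; rw [Finset.mem_Ico] at *; omega
      · intro a ha; rw [Finset.mem_Ico] at ha; omega
      · intro a ha; rw [Finset.mem_Ico] at ha; omega
      · intro a ha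
        rw [Finset.mem_Ico] at ha
        have h1 : ((N - a : ℕ) : ℝ) = (N : ℝ) - a := by
          push_cast [Nat.cast_sub (by omega : a ≤ N)]; ring
        have h2 : s (N - a) = s a := by
          rw [hs]; simp only [h1]
          rw [show Real.pi * ((N:ℝ) - a) / N = Real.pi - Real.pi * a / N by
            field_simp, Real.sin_pi_sub]
        rw [h2, show N - (N - a) = a by omega]
    have hP2 : (∏ n ∈ Finset.Ico 1 N, s n ^ n) ^ 2 = (N:ℝ) ^ N := by
      rw [pow_two]
      nth_rewrite 2 [hrefl]
      rw [← Finset.prod_mul_distrib,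
        Finset.prod_congr rfl (fun n hn => by
          rw [← pow_add, show n + (N - n) = N from by rw [Finset.mem_Ico] at hn; omega]),
        Finset.prod_pow, hQ]
    have hPpos : 0 < ∏ n ∈ Finset.Ico 1 N, s n ^ n :=
      Finset.prod_pos fun n hn => pow_pos (hpos n hn) n
    have hTpos : 0 < (N:ℝ) ^ ((N:ℝ)/2) :=
      Real.rpow_pos_of_pos (by exact_mod_cast Nat.pos_of_ne_zero (by omega)) _
    have hT : ((N:ℝ) ^ ((N:ℝ)/2)) ^ 2 = (N:ℝ) ^ N := by
      rw [← Real.rpow_natCast ((N:ℝ) ^ ((N:ℝ)/2)) 2, ← Real.rpow_mul (by positivity)]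
      rw [show (N:ℝ)/2 * ((2:ℕ):ℝ) = (N:ℝ) by push_cast; ring, Real.rpow_natCast]
    calc ∏ n ∈ Finset.Ico 1 N, s n ^ n
        = Real.sqrt ((∏ n ∈ Finset.Ico 1 N, s n ^ n)^2) := (Real.sqrt_sq hPpos.le).symm
      _ = Real.sqrt (((N:ℝ) ^ ((N:ℝ)/2))^2) := by rw [hP2, hT]
      _ = (N:ℝ) ^ ((N:ℝ)/2) := Real.sqrt_sq hTpos.le
  have hsum : ∑ n ∈ Finset.Ico 1 N, (n:ℂ) * (((Real.pi * n / N - Real.pi / 2 : ℝ) : ℂ) * Complex.I)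
      = Complex.I * Real.pi * ((N:ℂ) - 1) * ((N:ℂ) - 2) / 12 := by
    have hterm : ∀ n : ℕ, (n:ℂ) * (((Real.pi * n / N - Real.pi / 2 : ℝ) : ℂ) * Complex.I)
        = ((Real.pi:ℂ) * Complex.I / N) * (n:ℂ)^2 - ((Real.pi:ℂ) * Complex.I / 2) * (n:ℂ) := by
      intro n; push_cast; ring
    rw [Finset.sum_congr rfl fun n _ => hterm n, Finset.sum_sub_distrib, ← Finset.mul_sum,
      ← Finset.mul_sum, e1, e2]
    field_simp
    ring
  calc ∏ n ∈ Finset.Ico 1 N, ((1:ℂ) - ω ^ n) ^ n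
      = ∏ n ∈ Finset.Ico 1 N, (((2 * Real.sin (Real.pi * n / N) : ℝ):ℂ)^n
          * Complex.exp ((n:ℂ) * (((Real.pi * n / N - Real.pi / 2 : ℝ) : ℂ) * Complex.I))) := by
        refine Finset.prod_congr rfl fun n _ => ?_
        rw [hfac n, mul_pow, ← Complex.exp_nat_mul]
    _ = ((∏ n ∈ Finset.Ico 1 N, (2 * Real.sin (Real.pi * n / N)) ^ n : ℝ):ℂ)
        * Complex.exp (∑ n ∈ Finset.Ico 1 N,
            (n:ℂ) * (((Real.pi * n / N - Real.pi / 2 : ℝ) : ℂ) * Complex.I)) := by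
        rw [Finset.prod_mul_distrib, Complex.exp_sum, Complex.ofReal_prod]
        push_cast
        rfl
    _ = (N : ℂ) ^ ((N : ℂ) / 2)
        * Complex.exp (Complex.I * Real.pi * ((N:ℂ) - 1) * ((N:ℂ) - 2) / 12) := by
        rw [hP, hsum, Complex.ofReal_cpow (by positivity)]
        push_cast
        rfl
end

section
/- The functional reflection identity V(ω^{-1}x^{-1}) · V(x) = y^{N(N-1)} x^{-N(N-1)/2} e^{iπ(N-1)(N-2)/6} holds on the Fermat curve x^N + y^N = 1. -/
open Finset Complex

lemma six_mul_sum_sq' (n : ℕ) :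
    6 * ∑ i ∈ range n, i ^ 2 = n * (n - 1) * (2 * n - 1) := by
  induction n with
  | zero => simp
  | succ k ih =>
    rw [Finset.sum_range_succ, Nat.mul_add, ih]
    rcases k with _ | j
    · simp
    · have h2 : 2 * (j + 1 + 1) - 1 = 2 * j + 3 := by omega
      have h4 : 2 * (j + 1) - 1 = 2 * j + 1 := by omega
      simp only [Nat.add_sub_cancel, h2, h4]
      ring

lemma prod_sub_pow' (N : ℕ) (hN : 0 < N) (z : ℂ) :
    ∏ i ∈ range N, (z - Complex.exp (2 * Real.pi * Complex.I / N) ^ i) = z ^ N - 1 := by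
  set ω := Complex.exp (2 * Real.pi * Complex.I / N) with hω
  have hprim : IsPrimitiveRoot ω N := Complex.isPrimitiveRoot_exp N hN.ne'
  have h2 : Polynomial.nthRootsFinset N (1 : ℂ) = (range N).image (ω ^ ·) := by
    symm
    apply Finset.eq_of_subset_of_card_le
    · intro a ha
      simp only [mem_image] at ha
      obtain ⟨i, _, rfl⟩ := ha
      exact (Polynomial.mem_nthRootsFinset hN 1).2
        (by rw [← pow_mul, mul_comm, pow_mul, hprim.pow_eq_one, one_pow])
    · rw [hprim.card_nthRootsFinset, Finset.card_image_of_injOn, Finset.card_range]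
      intro i hi j hj hij
      exact hprim.pow_inj (mem_range.mp hi) (mem_range.mp hj) hij
  have h1 := Polynomial.X_pow_sub_one_eq_prod hN hprim
  have h3 := congrArg (Polynomial.eval z) h1
  rw [h2, Finset.prod_image (fun i hi j hj hij =>
    hprim.pow_inj (mem_range.mp hi) (mem_range.mp hj) hij)] at h3
  simp only [Polynomial.eval_prod, Polynomial.eval_sub, Polynomial.eval_pow,
    Polynomial.eval_X, Polynomial.eval_C, Polynomial.eval_one] at h3
  exact h3.symm

lemma phase_eq (N S T : ℕ) (hN : 2 ≤ N) (hS : 2 * S = N * (N - 1))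
    (hT : 6 * T = N * (N - 1) * (2 * N - 1)) :
    (-1 : ℂ) ^ S * Complex.exp (2 * Real.pi * Complex.I / N) ^ T
      = Complex.exp (Complex.I * Real.pi * ((N : ℂ) - 1) * ((N : ℂ) - 2) / 6) := by
  have hn0 : (N : ℂ) ≠ 0 := Nat.cast_ne_zero.mpr (by omega)
  have hS' : 2 * (S : ℂ) = (N : ℂ) * ((N : ℂ) - 1) := by
    have h := congrArg (Nat.cast : ℕ → ℂ) hS
    push_cast [Nat.cast_sub (by omega : 1 ≤ N)] at h
    linear_combination h
  have hT' : 6 * (T : ℂ) = (N : ℂ) * ((N : ℂ) - 1) * (2 * (N : ℂ) - 1) := by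
    have h := congrArg (Nat.cast : ℕ → ℂ) hT
    push_cast [Nat.cast_sub (by omega : 1 ≤ N), Nat.cast_sub (by omega : 1 ≤ 2 * N)] at h
    linear_combination h
  rw [show (-1 : ℂ) = Complex.exp (Real.pi * Complex.I) from Complex.exp_pi_mul_I.symm,
    ← Complex.exp_nat_mul, ← Complex.exp_nat_mul, ← Complex.exp_add]
  refine Complex.exp_eq_exp_iff_exists_int.2 ⟨(S : ℤ), ?_⟩
  push_cast
  have hSc : (S : ℂ) = (N : ℂ) * ((N : ℂ) - 1) / 2 := by linear_combination hS' / 2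
  have hTc : (T : ℂ) = (N : ℂ) * ((N : ℂ) - 1) * (2 * (N : ℂ) - 1) / 6 := by
    linear_combination hT' / 6
  rw [hSc, hTc]
  field_simp
  ring

/-- The reflection identity
`V(ω⁻¹x⁻¹) V(x) x^{N(N-1)/2} = (1-x^N)^{N-1} e^{iπ(N-1)(N-2)/6}`
on the Fermat curve (with `y^{N(N-1)} = (1-x^N)^{N-1}`), where
`V(x) = ∏_{n=1}^{N-1}(1-ω^{n+1}x)^n` and `ω = e^{2πi/N}`. -/
theorem V_reflection (N : ℕ) (hN : 2 ≤ N) (x : ℂ) (hx0 : x ≠ 0)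
    (hx : ∀ n : ℕ, 1 - Complex.exp (2 * Real.pi * Complex.I / N) ^ n * x ≠ 0) :
    (∏ n ∈ Finset.Ico 1 N,
        (1 - Complex.exp (2 * Real.pi * Complex.I / N) ^ (n + 1)
          * ((Complex.exp (2 * Real.pi * Complex.I / N))⁻¹ * x⁻¹)) ^ n)
      * (∏ n ∈ Finset.Ico 1 N,
        (1 - Complex.exp (2 * Real.pi * Complex.I / N) ^ (n + 1) * x) ^ n)
      * x ^ (N * (N - 1) / 2)
      = (1 - x ^ N) ^ (N - 1)
        * Complex.exp (Complex.I * Real.pi * ((N : ℂ) - 1) * ((N : ℂ) - 2) / 6) := by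
  set ω := Complex.exp (2 * Real.pi * Complex.I / N) with hωdef
  have hNpos : 0 < N := by omega
  have hprim : IsPrimitiveRoot ω N := Complex.isPrimitiveRoot_exp N hNpos.ne'
  have hωN : ω ^ N = 1 := hprim.pow_eq_one
  have hω0 : ω ≠ 0 := Complex.exp_ne_zero _
  have hins : range N = insert 0 (Ico 1 N) := by
    ext m; simp only [mem_range, mem_insert, mem_Ico]; omega
  have h0notin : (0 : ℕ) ∉ Ico 1 N := by simp
  set S := ∑ n ∈ Ico 1 N, n with hSdef
  set T := ∑ n ∈ Ico 1 N, n ^ 2 with hTdef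
  have hS : 2 * S = N * (N - 1) := by
    rw [hSdef, show (∑ n ∈ Ico 1 N, n) = ∑ n ∈ range N, n by
      rw [hins, Finset.sum_insert h0notin, zero_add]]
    rw [mul_comm]; exact Finset.sum_range_id_mul_two N
  have hT : 6 * T = N * (N - 1) * (2 * N - 1) := by
    rw [hTdef, show (∑ n ∈ Ico 1 N, n ^ 2) = ∑ n ∈ range N, n ^ 2 by
      rw [hins, Finset.sum_insert h0notin]; norm_num]
    exact six_mul_sum_sq' N
  have hSval : N * (N - 1) / 2 = S := by
    rw [← hS, Nat.mul_div_cancel_left _ (by norm_num)]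
  -- Fermat product
  have hfermat : ∏ i ∈ range N, (1 - ω ^ i * x) = 1 - x ^ N := by
    have h := prod_sub_pow' N hNpos x⁻¹
    rw [hωdef]
    calc ∏ i ∈ range N, (1 - Complex.exp (2 * Real.pi * Complex.I / N) ^ i * x)
        = ∏ i ∈ range N, ((x⁻¹ - Complex.exp (2 * Real.pi * Complex.I / N) ^ i) * x) := by
          refine Finset.prod_congr rfl fun i _ => ?_
          field_simp
      _ = (x⁻¹ ^ N - 1) * x ^ N := by
          rw [Finset.prod_mul_distrib, h, Finset.prod_const, Finset.card_range]
      _ = 1 - x ^ N := by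
          rw [inv_pow, sub_mul, inv_mul_cancel₀ (pow_ne_zero _ hx0), one_mul]
  -- Step 1: factor the first product
  have hA1 : ∀ n ∈ Ico 1 N, (1 - ω ^ (n + 1) * (ω⁻¹ * x⁻¹)) ^ n
      = ((-1 : ℂ) ^ n * ω ^ (n ^ 2) * (x⁻¹) ^ n) * (1 - ω ^ (N - n) * x) ^ n := by
    intro n hn
    rw [mem_Ico] at hn
    have hpow : ω ^ n * ω ^ (N - n) = 1 := by
      rw [← pow_add, show n + (N - n) = N by omega, hωN]
    have hfac : 1 - ω ^ (n + 1) * (ω⁻¹ * x⁻¹) = (-(ω ^ n) * x⁻¹) * (1 - ω ^ (N - n) * x) := by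
      field_simp
      linear_combination (-(ω * x)) * hpow
    rw [hfac, mul_pow, show (-(ω ^ n) * x⁻¹) = (-1) * ω ^ n * x⁻¹ by ring,
      mul_pow, mul_pow, ← pow_mul, show n * n = n ^ 2 by ring]
  have hA : (∏ n ∈ Ico 1 N, (1 - ω ^ (n + 1) * (ω⁻¹ * x⁻¹)) ^ n)
      = ((-1 : ℂ) ^ S * ω ^ T * (x⁻¹) ^ S) * ∏ n ∈ Ico 1 N, (1 - ω ^ (N - n) * x) ^ n := by
    rw [Finset.prod_congr rfl hA1, Finset.prod_mul_distrib, Finset.prod_mul_distrib,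
      Finset.prod_mul_distrib, Finset.prod_pow_eq_pow_sum, Finset.prod_pow_eq_pow_sum,
      Finset.prod_pow_eq_pow_sum]
  -- reindex
  have hrev : (∏ n ∈ Ico 1 N, (1 - ω ^ (N - n) * x) ^ n)
      = ∏ m ∈ Ico 1 N, (1 - ω ^ m * x) ^ (N - m) := by
    refine Finset.prod_nbij' (fun n => N - n) (fun m => N - m) ?_ ?_ ?_ ?_ ?_
    · intro a ha; simp only [mem_Ico] at ha ⊢; omega
    · intro a ha; simp only [mem_Ico] at ha ⊢; omega
    · intro a ha; simp only [mem_Ico] at ha; show N - (N - a) = a; omega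
    · intro a ha; simp only [mem_Ico] at ha; show N - (N - a) = a; omega
    · intro a ha; simp only [mem_Ico] at ha
      show (1 - ω ^ (N - a) * x) ^ a = (1 - ω ^ (N - a) * x) ^ (N - (N - a))
      rw [show N - (N - a) = a by omega]
  have hB : (∏ n ∈ Ico 1 N, (1 - ω ^ (n + 1) * x) ^ n)
      = ∏ m ∈ Ico 2 (N + 1), (1 - ω ^ m * x) ^ (m - 1) := by
    refine Finset.prod_nbij' (fun n => n + 1) (fun m => m - 1) ?_ ?_ ?_ ?_ ?_
    · intro a ha; simp only [mem_Ico] at ha ⊢; omega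
    · intro a ha; simp only [mem_Ico] at ha ⊢; omega
    · intro a ha; simp only [mem_Ico] at ha; show a + 1 - 1 = a; omega
    · intro a ha; simp only [mem_Ico] at ha; show a - 1 + 1 = a; omega
    · intro a ha; simp only [mem_Ico] at ha
      show (1 - ω ^ (a + 1) * x) ^ a = (1 - ω ^ (a + 1) * x) ^ (a + 1 - 1)
      rw [show a + 1 - 1 = a by omega]
  have hins1 : Ico 1 N = insert 1 (Ico 2 N) := by
    ext m; simp only [mem_insert, mem_Ico]; omega
  have h1notin : (1 : ℕ) ∉ Ico 2 N := by simp
  -- combine the two middle products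
  have hcomb : (∏ m ∈ Ico 1 N, (1 - ω ^ m * x) ^ (N - m))
      * (∏ m ∈ Ico 2 (N + 1), (1 - ω ^ m * x) ^ (m - 1)) = (1 - x ^ N) ^ (N - 1) := by
    rw [Finset.prod_Ico_succ_top (by omega : 2 ≤ N), hins1, Finset.prod_insert h1notin,
      show (1 - ω ^ N * x) = 1 - ω ^ 0 * x by rw [hωN, pow_zero]]
    have hmid : (∏ m ∈ Ico 2 N, (1 - ω ^ m * x) ^ (N - m))
        * (∏ m ∈ Ico 2 N, (1 - ω ^ m * x) ^ (m - 1))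
        = ∏ m ∈ Ico 2 N, (1 - ω ^ m * x) ^ (N - 1) := by
      rw [← Finset.prod_mul_distrib]
      refine Finset.prod_congr rfl fun m hm => ?_
      simp only [mem_Ico] at hm
      rw [← pow_add, show N - m + (m - 1) = N - 1 by omega]
    calc (1 - ω ^ 1 * x) ^ (N - 1) * (∏ m ∈ Ico 2 N, (1 - ω ^ m * x) ^ (N - m))
          * ((∏ m ∈ Ico 2 N, (1 - ω ^ m * x) ^ (m - 1)) * (1 - ω ^ 0 * x) ^ (N - 1))
        = (1 - ω ^ 0 * x) ^ (N - 1) * ((1 - ω ^ 1 * x) ^ (N - 1)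
            * ∏ m ∈ Ico 2 N, (1 - ω ^ m * x) ^ (N - 1)) := by
          rw [← hmid]; ring
      _ = ∏ m ∈ range N, (1 - ω ^ m * x) ^ (N - 1) := by
          rw [hins, Finset.prod_insert h0notin, hins1, Finset.prod_insert h1notin]
      _ = (1 - x ^ N) ^ (N - 1) := by rw [Finset.prod_pow, hfermat]
  -- final assembly
  have hxS : (x⁻¹) ^ S * x ^ S = 1 := by
    rw [← mul_pow, inv_mul_cancel₀ hx0, one_pow]
  have hph := phase_eq N S T hN hS hT
  rw [hSval, hA, hrev, hB]
  calc ((-1 : ℂ) ^ S * ω ^ T * (x⁻¹) ^ S * ∏ m ∈ Ico 1 N, (1 - ω ^ m * x) ^ (N - m))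
        * (∏ m ∈ Ico 2 (N + 1), (1 - ω ^ m * x) ^ (m - 1)) * x ^ S
      = ((-1 : ℂ) ^ S * ω ^ T) * ((x⁻¹) ^ S * x ^ S)
          * ((∏ m ∈ Ico 1 N, (1 - ω ^ m * x) ^ (N - m))
            * ∏ m ∈ Ico 2 (N + 1), (1 - ω ^ m * x) ^ (m - 1)) := by ring
    _ = (1 - x ^ N) ^ (N - 1)
          * Complex.exp (Complex.I * Real.pi * ((N : ℂ) - 1) * ((N : ℂ) - 2) / 6) := by
        rw [hxS, hcomb, hph, mul_one, mul_comm]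
end

section
/- The Fourier-type product formula ∏_{n=0}^{N-1} ∑_{a=0}^{N-1} ω^{na}/Φ(a) = V(ω^{-1}) holds, where Φ(a) = (-1)^a e^{πia²/N} and V(ω^{-1}) = ∏_{n=1}^{N-1}(1-ω^n)^n. -/
open Finset

section aux
variable {N : ℕ}

lemma gsp_omega_pow (m : ℕ) :
    Complex.exp (2 * Real.pi * Complex.I / N) ^ m = Complex.exp (2 * Real.pi * Complex.I * m / N) := by
  rw [← Complex.exp_nat_mul]; ring_nf

lemma gsp_omega_N (hN : N ≠ 0) :
    Complex.exp (2 * Real.pi * Complex.I / N) ^ N = 1 := by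
  have hNc : (N : ℂ) ≠ 0 := Nat.cast_ne_zero.mpr hN
  rw [gsp_omega_pow, mul_div_assoc, div_self hNc, mul_one, Complex.exp_two_pi_mul_I]

lemma gsp_omega_mod (hN : N ≠ 0) (m : ℕ) :
    Complex.exp (2 * Real.pi * Complex.I / N) ^ (m % N) = Complex.exp (2 * Real.pi * Complex.I / N) ^ m := by
  conv_rhs => rw [← Nat.div_add_mod m N, pow_add, pow_mul, gsp_omega_N hN, one_pow, one_mul]

lemma gsp_omega_ne_one (hN : N ≠ 0) {d : ℕ} (h0 : 0 < d) (h1 : d < N) :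
    Complex.exp (2 * Real.pi * Complex.I / N) ^ d ≠ 1 := by
  rw [gsp_omega_pow]
  intro h
  rw [Complex.exp_eq_one_iff] at h
  obtain ⟨k, hk⟩ := h
  have hNc : (N : ℂ) ≠ 0 := Nat.cast_ne_zero.mpr hN
  have h2 : (2 : ℂ) * Real.pi * Complex.I ≠ 0 := by
    simp [Real.pi_ne_zero, Complex.I_ne_zero]
  have hd : (d : ℂ) = k * N := by
    field_simp at hk
    have hk' : 2 * (Real.pi : ℂ) * Complex.I * d = 2 * Real.pi * Complex.I * (k * N) := by
      rw [hk]; ring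
    exact mul_left_cancel₀ h2 hk'
  have hdz : (d : ℤ) = k * N := by exact_mod_cast hd
  have hNz : (0 : ℤ) < N := by exact_mod_cast Nat.pos_of_ne_zero hN
  have hd0 : (0 : ℤ) < d := by exact_mod_cast h0
  have hd1 : (d : ℤ) < N := by exact_mod_cast h1
  rcases le_or_gt k 0 with hk0 | hk0
  · nlinarith
  · nlinarith

end aux

noncomputable def gspPsi (N a : ℕ) : ℂ :=
  (-1) ^ a * Complex.exp (-(Real.pi * Complex.I * (a : ℂ) ^ 2 / N))

section aux2
variable {N : ℕ}

lemma gspPsi_inv (a : ℕ) :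
    ((-1 : ℂ) ^ a * Complex.exp (Real.pi * Complex.I * (a : ℂ) ^ 2 / N))⁻¹ = gspPsi N a := by
  rw [mul_inv, ← Complex.exp_neg, gspPsi]
  congr 1
  rw [← inv_pow]
  norm_num

lemma gspPsi_ne_zero (a : ℕ) : gspPsi N a ≠ 0 :=
  mul_ne_zero (pow_ne_zero _ (by norm_num)) (Complex.exp_ne_zero _)

lemma gspPsi_add (hN : N ≠ 0) (a b : ℕ) :
    gspPsi N (a + b) = gspPsi N a * gspPsi N b * Complex.exp (-(2 * Real.pi * Complex.I * (a * b : ℕ) / N)) := by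
  have hNc : (N : ℂ) ≠ 0 := Nat.cast_ne_zero.mpr hN
  have he : Complex.exp (-(Real.pi * Complex.I * ((a + b : ℕ) : ℂ) ^ 2 / N)) =
      Complex.exp (-(Real.pi * Complex.I * (a : ℂ) ^ 2 / N)) *
        Complex.exp (-(Real.pi * Complex.I * (b : ℂ) ^ 2 / N)) *
        Complex.exp (-(2 * Real.pi * Complex.I * ((a * b : ℕ) : ℂ) / N)) := by
    rw [← Complex.exp_add, ← Complex.exp_add]
    congr 1
    push_cast
    field_simp
    ring
  unfold gspPsi
  rw [pow_add, he]
  ring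

lemma gspPsi_period (hN : N ≠ 0) (a : ℕ) : gspPsi N (a + N) = gspPsi N a := by
  have hNc : (N : ℂ) ≠ 0 := Nat.cast_ne_zero.mpr hN
  unfold gspPsi
  have h1 : (-(Real.pi * Complex.I * ((a + N : ℕ) : ℂ) ^ 2 / N)) =
      -(Real.pi * Complex.I * (a : ℂ) ^ 2 / N) + ((-a : ℤ) * (2 * Real.pi * Complex.I)) +
        ((-(N : ℤ)) : ℂ) * (Real.pi * Complex.I) := by
    push_cast
    field_simp
    ring
  have h5 : Complex.exp (-(N : ℂ) * (Real.pi * Complex.I)) = ((-1 : ℂ) ^ N)⁻¹ := by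
    have h6 := Complex.exp_int_mul (Real.pi * Complex.I) (-(N : ℤ))
    push_cast at h6
    rw [h6, Complex.exp_pi_mul_I, zpow_neg, zpow_natCast]
  rw [h1, Complex.exp_add, Complex.exp_add, Complex.exp_int_mul_two_pi_mul_I, mul_one, pow_add]
  push_cast
  rw [h5]
  have h4 : ((-1 : ℂ) ^ N) ≠ 0 := pow_ne_zero _ (by norm_num)
  field_simp

lemma gspPsi_mod (hN : N ≠ 0) (a : ℕ) : gspPsi N (a % N) = gspPsi N a := by
  conv_rhs => rw [← Nat.div_add_mod a N]
  generalize a / N = k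
  induction k with
  | zero => simp
  | succ n ih =>
      rw [show N * (n + 1) + a % N = N * n + a % N + N by ring, gspPsi_period hN]
      exact ih

lemma gspPsi_sq (hN : N ≠ 0) (a : ℕ) :
    gspPsi N a ^ 2 * Complex.exp (2 * Real.pi * Complex.I / N) ^ (a ^ 2) = 1 := by
  have hNc : (N : ℂ) ≠ 0 := Nat.cast_ne_zero.mpr hN
  rw [gspPsi, mul_pow]
  have h1 : ((-1 : ℂ) ^ a) ^ 2 = 1 := by
    rw [← pow_mul, mul_comm, pow_mul]; norm_num
  rw [h1, one_mul, gsp_omega_pow, sq, ← Complex.exp_add, ← Complex.exp_add]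
  rw [show -(Real.pi * Complex.I * (a : ℂ) ^ 2 / N) + -(Real.pi * Complex.I * (a : ℂ) ^ 2 / N) +
      2 * Real.pi * Complex.I * ((a ^ 2 : ℕ) : ℂ) / N = 0 by push_cast; field_simp; ring]
  exact Complex.exp_zero

end aux2

section core
variable {N : ℕ} [NeZero N] {ω : ℂ} {ψ : ZMod N → ℂ}

lemma gsp_core (hω : ω ≠ 0) (hωmod : ∀ m, ω ^ (m % N) = ω ^ m)
    (hψ0 : ∀ x, ψ x ≠ 0)
    (hψadd : ∀ x y : ZMod N, ψ (x + y) * ω ^ ((x * y).val) = ψ x * ψ y)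
    (hψsq : ∀ x : ZMod N, ψ x ^ 2 * ω ^ ((x * x).val) = 1)
    (hdF : (Matrix.of (fun j k : ZMod N => ω ^ ((j * k).val))).det ≠ 0) :
    ∏ n : ZMod N, (∑ a : ZMod N, ω ^ ((n * a).val) * ψ a)
      = (∏ j : ZMod N, ψ j) ^ 2 * (Matrix.of (fun j k : ZMod N => ω ^ ((j * k).val))).det := by
  have hval : ∀ x y : ZMod N, ω ^ x.val * ω ^ y.val = ω ^ (x + y).val := by
    intro x y
    rw [ZMod.val_add, hωmod, pow_add]
  set F : Matrix (ZMod N) (ZMod N) ℂ := Matrix.of (fun j k : ZMod N => ω ^ ((j * k).val)) with hF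
  have key : ∀ j k : ZMod N, ψ (k - j) = ψ j * ω ^ ((j * k).val) * ψ k := by
    intro j k
    have h1 := hψadd (k - j) j
    rw [sub_add_cancel] at h1
    have h3 : ω ^ ((k - j) * j).val * ω ^ (j * j).val = ω ^ (j * k).val := by
      rw [hval]
      congr 1
      ring_nf
    have hne : ψ j * ω ^ (j * j).val ≠ 0 := mul_ne_zero (hψ0 j) (pow_ne_zero _ hω)
    apply mul_right_cancel₀ hne
    have e1 : ψ (k - j) * (ψ j * ω ^ (j * j).val) = ψ k * ω ^ (j * k).val := by
      calc ψ (k - j) * (ψ j * ω ^ (j * j).val) = (ψ (k - j) * ψ j) * ω ^ (j * j).val := by ring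
        _ = (ψ k * ω ^ ((k - j) * j).val) * ω ^ (j * j).val := by rw [← h1]
        _ = ψ k * (ω ^ ((k - j) * j).val * ω ^ (j * j).val) := by ring
        _ = ψ k * ω ^ (j * k).val := by rw [h3]
    have e2 : (ψ j * ω ^ ((j * k).val) * ψ k) * (ψ j * ω ^ (j * j).val) = ψ k * ω ^ (j * k).val := by
      calc (ψ j * ω ^ ((j * k).val) * ψ k) * (ψ j * ω ^ (j * j).val)
          = (ψ j ^ 2 * ω ^ (j * j).val) * (ω ^ ((j * k).val) * ψ k) := by ring
        _ = ψ k * ω ^ (j * k).val := by rw [hψsq j]; ring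
    rw [e1, e2]
  set M : Matrix (ZMod N) (ZMod N) ℂ := Matrix.diagonal ψ * F * Matrix.diagonal ψ with hM
  have hMentry : ∀ j k, M j k = ψ (k - j) := by
    intro j k
    rw [hM, Matrix.mul_diagonal, Matrix.diagonal_mul, key j k]
    rfl
  set S : ZMod N → ℂ := fun n => ∑ a : ZMod N, ω ^ ((n * a).val) * ψ a with hS
  have hFM : F * M = Matrix.diagonal (fun n => S (-n)) * F := by
    ext n k
    rw [Matrix.mul_apply, Matrix.diagonal_mul]
    calc ∑ j : ZMod N, F n j * M j k
        = ∑ j : ZMod N, ω ^ ((n * j).val) * ψ (k - j) := by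
          refine Finset.sum_congr rfl fun j _ => ?_
          rw [hMentry, hF, Matrix.of_apply]
      _ = ∑ m : ZMod N, ω ^ ((n * (k - m)).val) * ψ (k - (k - m)) := by
          rw [← Equiv.sum_comp (Equiv.subLeft k)
            (fun j => ω ^ ((n * j).val) * ψ (k - j))]
          rfl
      _ = ∑ m : ZMod N, ω ^ ((n * k).val) * (ω ^ ((-n * m).val) * ψ m) := by
          refine Finset.sum_congr rfl fun m _ => ?_
          have hnm : n * (k - m) = n * k + -n * m := by ring
          rw [sub_sub_cancel, hnm, ← hval]
          ring
      _ = S (-n) * F n k := by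
          rw [← Finset.mul_sum, hF, Matrix.of_apply, hS]
          ring
  have hdet1 : F.det * M.det = F.det * ((∏ n : ZMod N, S (-n))) := by
    rw [← Matrix.det_mul, hFM, Matrix.det_mul, Matrix.det_diagonal]
    ring
  have hdet2 : M.det = ∏ n : ZMod N, S (-n) := mul_left_cancel₀ hdF hdet1
  have hdet3 : M.det = (∏ j : ZMod N, ψ j) ^ 2 * F.det := by
    rw [hM, Matrix.det_mul, Matrix.det_mul, Matrix.det_diagonal]
    ring
  have hneg : ∏ n : ZMod N, S (-n) = ∏ n : ZMod N, S n :=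
    Equiv.prod_comp (Equiv.neg (ZMod N)) S
  calc ∏ n : ZMod N, S n = ∏ n : ZMod N, S (-n) := hneg.symm
    _ = M.det := hdet2.symm
    _ = (∏ j : ZMod N, ψ j) ^ 2 * F.det := hdet3

end core

noncomputable def gspEquiv (N : ℕ) [NeZero N] : Fin N ≃ ZMod N where
  toFun i := ((i : ℕ) : ZMod N)
  invFun x := ⟨x.val, x.val_lt⟩
  left_inv i := by
    ext
    simp [ZMod.val_cast_of_lt i.isLt]
  right_inv x := ZMod.natCast_rightInverse x

section vdm
variable {N : ℕ} [NeZero N] {ω : ℂ}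

lemma gsp_detF (hωmod : ∀ m, ω ^ (m % N) = ω ^ m) :
    (Matrix.of (fun j k : ZMod N => ω ^ ((j * k).val))).det
      = ∏ i : Fin N, ∏ j ∈ Ioi i, (ω ^ (j : ℕ) - ω ^ (i : ℕ)) := by
  rw [← Matrix.det_submatrix_equiv_self (gspEquiv N)]
  have hsub : (Matrix.of (fun j k : ZMod N => ω ^ ((j * k).val))).submatrix (gspEquiv N) (gspEquiv N)
      = Matrix.vandermonde (fun i : Fin N => ω ^ (i : ℕ)) := by
    ext i j
    simp only [Matrix.submatrix_apply, Matrix.of_apply, Matrix.vandermonde_apply]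
    have h1 : (gspEquiv N i * gspEquiv N j) = (((i : ℕ) * (j : ℕ) : ℕ) : ZMod N) := by
      push_cast
      rfl
    rw [h1, ZMod.val_natCast, hωmod, pow_mul]
  rw [hsub, Matrix.det_vandermonde]

-- inner reindex
lemma gsp_inner (f : ℕ → ℂ) (i : Fin N) :
    ∏ j ∈ Ioi i, f ((j : ℕ) - (i : ℕ)) = ∏ d ∈ Ico 1 (N - (i : ℕ)), f d := by
  refine Finset.prod_nbij' (fun j => (j : ℕ) - (i : ℕ))
    (fun d => if h : (i : ℕ) + d < N then (⟨(i : ℕ) + d, h⟩ : Fin N) else i) ?_ ?_ ?_ ?_ ?_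
  · intro j hj
    rw [Finset.mem_Ioi, Fin.lt_def] at hj
    have hjN : (j : ℕ) < N := j.isLt
    rw [Finset.mem_Ico]
    beta_reduce
    omega
  · intro d hd
    rw [Finset.mem_Ico] at hd
    have h : (i : ℕ) + d < N := by omega
    show (if h : (i : ℕ) + d < N then (⟨(i : ℕ) + d, h⟩ : Fin N) else i) ∈ Ioi i
    rw [dif_pos h, Finset.mem_Ioi, Fin.lt_def]
    show (i : ℕ) < (i : ℕ) + d
    omega
  · intro j hj
    rw [Finset.mem_Ioi, Fin.lt_def] at hj
    have hjN : (j : ℕ) < N := j.isLt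
    have h : (i : ℕ) + ((j : ℕ) - (i : ℕ)) < N := by omega
    show (if h : (i : ℕ) + ((j : ℕ) - (i : ℕ)) < N then (⟨_, h⟩ : Fin N) else i) = j
    rw [dif_pos h]
    ext
    show (i : ℕ) + ((j : ℕ) - (i : ℕ)) = (j : ℕ)
    omega
  · intro d hd
    rw [Finset.mem_Ico] at hd
    have h : (i : ℕ) + d < N := by omega
    show (((if h : (i : ℕ) + d < N then (⟨(i : ℕ) + d, h⟩ : Fin N) else i) : Fin N) : ℕ) - (i : ℕ) = d
    rw [dif_pos h]
    show (i : ℕ) + d - (i : ℕ) = d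
    omega
  · intro j _
    rfl

end vdm
lemma gsp_swap (N : ℕ) (g : ℕ → ℂ) :
    ∏ i ∈ range N, ∏ d ∈ Ico 1 (N - i), g d = ∏ d ∈ Ico 1 N, g d ^ (N - d) := by
  rw [Finset.prod_comm' (s' := fun d => range (N - d)) (t' := Ico 1 N) ?_]
  · exact Finset.prod_congr rfl fun d _ => by
      rw [Finset.prod_const, Finset.card_range]
  · intro x y
    simp only [Finset.mem_range, Finset.mem_Ico]
    omega

lemma gsp_reflect (N : ℕ) (g : ℕ → ℂ) :
    ∏ d ∈ Ico 1 N, g (N - d) ^ (N - d) = ∏ d ∈ Ico 1 N, g d ^ d := by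
  refine Finset.prod_nbij' (fun d => N - d) (fun d => N - d) ?_ ?_ ?_ ?_ ?_ <;>
    intro a ha <;> simp only [Finset.mem_Ico] at * <;> beta_reduce <;>
    first
      | omega
      | (rw [Nat.sub_sub_self (by omega : a ≤ N)])
      | rfl

-- integer sum helpers
lemma gsp_s1 (n : ℕ) : 2 * ∑ i ∈ range n, (i : ℤ) = n * (n - 1) := by
  induction n with
  | zero => simp
  | succ m ih =>
      rw [Finset.sum_range_succ]
      push_cast
      push_cast at ih
      ring_nf
      ring_nf at ih
      linarith

lemma gsp_s2 (n : ℕ) : 6 * ∑ i ∈ range n, (i : ℤ) ^ 2 = n * (n - 1) * (2 * n - 1) := by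
  induction n with
  | zero => simp
  | succ m ih =>
      rw [Finset.sum_range_succ]
      push_cast
      push_cast at ih
      ring_nf
      ring_nf at ih
      linarith

-- A + B = Q
lemma gsp_ABQ (N : ℕ) (hN : 2 ≤ N) :
    (∑ i ∈ range N, i * (N - 1 - i)) + (∑ d ∈ Ico 1 N, d * (N - d)) = ∑ a ∈ range N, a ^ 2 := by
  have hA : ((∑ i ∈ range N, i * (N - 1 - i) : ℕ) : ℤ)
      = ∑ i ∈ range N, (i : ℤ) * ((N : ℤ) - 1 - i) := by
    push_cast
    refine Finset.sum_congr rfl fun i hi => ?_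
    rw [Finset.mem_range] at hi
    have h1 : i ≤ N - 1 := by omega
    push_cast [Nat.cast_sub h1, Nat.cast_sub (by omega : 1 ≤ N)]
    ring
  have hB : ((∑ d ∈ Ico 1 N, d * (N - d) : ℕ) : ℤ)
      = ∑ d ∈ Ico 1 N, (d : ℤ) * ((N : ℤ) - d) := by
    push_cast
    refine Finset.sum_congr rfl fun d hd => ?_
    rw [Finset.mem_Ico] at hd
    push_cast [Nat.cast_sub (by omega : d ≤ N)]
    ring
  have hB2 : ∑ d ∈ Ico 1 N, (d : ℤ) * ((N : ℤ) - d) = ∑ d ∈ range N, (d : ℤ) * ((N : ℤ) - d) := by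
    rw [Finset.range_eq_Ico, Finset.sum_eq_sum_Ico_succ_bot (by omega : 0 < N)]
    simp
  have hQ : ((∑ a ∈ range N, a ^ 2 : ℕ) : ℤ) = ∑ a ∈ range N, (a : ℤ) ^ 2 := by push_cast; rfl
  have key : (∑ i ∈ range N, (i : ℤ) * ((N : ℤ) - 1 - i)) + (∑ d ∈ range N, (d : ℤ) * ((N : ℤ) - d))
      = ∑ a ∈ range N, (a : ℤ) ^ 2 := by
    have e1 := gsp_s1 N
    have e2 := gsp_s2 N
    have l1 : ∑ i ∈ range N, (i : ℤ) * ((N : ℤ) - 1 - i)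
        = ((N : ℤ) - 1) * (∑ i ∈ range N, (i : ℤ)) - ∑ i ∈ range N, (i : ℤ) ^ 2 := by
      rw [Finset.mul_sum, ← Finset.sum_sub_distrib]
      exact Finset.sum_congr rfl fun i _ => by ring
    have l2 : ∑ d ∈ range N, (d : ℤ) * ((N : ℤ) - d)
        = (N : ℤ) * (∑ i ∈ range N, (i : ℤ)) - ∑ i ∈ range N, (i : ℤ) ^ 2 := by
      rw [Finset.mul_sum, ← Finset.sum_sub_distrib]
      exact Finset.sum_congr rfl fun i _ => by ring
    rw [l1, l2]
    nlinarith [e1, e2]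
  have hfin : ((∑ i ∈ range N, i * (N - 1 - i) : ℕ) : ℤ)
      + ((∑ d ∈ Ico 1 N, d * (N - d) : ℕ) : ℤ)
      = ((∑ a ∈ range N, a ^ 2 : ℕ) : ℤ) := by
    rw [hA, hB, hB2, hQ]
    exact key
  exact_mod_cast hfin

-- P = S'
lemma gsp_PS (N : ℕ) (hN : 2 ≤ N) :
    (∑ i ∈ range N, (N - 1 - i)) = ∑ d ∈ Ico 1 N, (N - d) := by
  have h1 : ∑ i ∈ range N, (N - 1 - i) = ∑ i ∈ range N, i :=
    Finset.sum_range_reflect (fun j => j) N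
  have h2 : ∑ d ∈ Ico 1 N, (N - d) = ∑ d ∈ Ico 1 N, d := by
    refine Finset.sum_nbij' (fun d => N - d) (fun d => N - d) ?_ ?_ ?_ ?_ ?_ <;>
      intro a ha <;> simp only [Finset.mem_Ico] at * <;> beta_reduce <;> omega
  have h3 : ∑ d ∈ range N, d = 0 + ∑ d ∈ Ico 1 N, d := by
    rw [Finset.range_eq_Ico, Finset.sum_eq_sum_Ico_succ_bot (by omega : 0 < N)]
  omega

/-- The Fourier-type product formula `∏_{n=0}^{N-1} ∑_{a=0}^{N-1} ω^{na}/Φ(a) = V(ω⁻¹)`,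
where `Φ(a) = (-1)^a e^{πia²/N}` and `V(ω⁻¹) = ∏_{n=1}^{N-1}(1-ω^n)^n`, `ω = e^{2πi/N}`. -/
theorem gauss_sum_product (N : ℕ) (hN : 2 ≤ N) :
    ∏ n ∈ Finset.range N, ∑ a ∈ Finset.range N,
        Complex.exp (2 * Real.pi * Complex.I / N) ^ (n * a)
          / ((-1 : ℂ) ^ a * Complex.exp (Real.pi * Complex.I * (a : ℂ) ^ 2 / N))
      = ∏ n ∈ Finset.Ico 1 N,
          (1 - Complex.exp (2 * Real.pi * Complex.I / N) ^ n) ^ n := by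
  haveI : NeZero N := ⟨by omega⟩
  have hN0 : N ≠ 0 := by omega
  set ω : ℂ := Complex.exp (2 * Real.pi * Complex.I / N) with hωdef
  have hω : ω ≠ 0 := Complex.exp_ne_zero _
  have hωmod : ∀ m, ω ^ (m % N) = ω ^ m := gsp_omega_mod hN0
  set ψZ : ZMod N → ℂ := fun x => gspPsi N x.val with hψZ
  -- Step 1 : rewrite LHS as a product over ZMod N
  have hval_cast : ∀ (x : ZMod N), ((x.val : ℕ) : ZMod N) = x := fun x => ZMod.natCast_rightInverse x
  have step1 : ∏ n ∈ Finset.range N, (∑ a ∈ Finset.range N,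
        ω ^ (n * a) / ((-1 : ℂ) ^ a * Complex.exp (Real.pi * Complex.I * (a : ℂ) ^ 2 / N)))
      = ∏ x : ZMod N, (∑ a : ZMod N, ω ^ ((x * a).val) * ψZ a) := by
    refine Finset.prod_nbij' (fun n => ((n : ℕ) : ZMod N)) (fun x => x.val)
      (fun n _ => Finset.mem_univ _) (fun x _ => Finset.mem_range.mpr x.val_lt)
      (fun n hn => ZMod.val_cast_of_lt (Finset.mem_range.mp hn))
      (fun x _ => hval_cast x) ?_
    intro n hn
    refine Finset.sum_nbij' (fun a => ((a : ℕ) : ZMod N)) (fun x => x.val)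
      (fun a _ => Finset.mem_univ _) (fun x _ => Finset.mem_range.mpr x.val_lt)
      (fun a ha => ZMod.val_cast_of_lt (Finset.mem_range.mp ha))
      (fun x _ => hval_cast x) ?_
    intro a ha
    rw [div_eq_mul_inv, gspPsi_inv]
    congr 1
    · -- ω ^ (n*a) = ω ^ (((n:ZMod N)*(a:ZMod N)).val)
      rw [show ((n : ZMod N) * (a : ZMod N)) = ((n * a : ℕ) : ZMod N) by push_cast; rfl,
        ZMod.val_natCast, hωmod]
    · -- gspPsi N a = ψZ (a : ZMod N)
      rw [hψZ]
      beta_reduce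
      rw [ZMod.val_natCast, gspPsi_mod hN0]
  rw [step1]
  -- Step 2 : core identity
  have hψadd : ∀ x y : ZMod N, ψZ (x + y) * ω ^ ((x * y).val) = ψZ x * ψZ y := by
    intro x y
    rw [hψZ]
    beta_reduce
    rw [ZMod.val_add, gspPsi_mod hN0, gspPsi_add hN0, ZMod.val_mul, hωmod, gsp_omega_pow,
      mul_assoc, ← Complex.exp_add]
    rw [show -(2 * Real.pi * Complex.I * ((x.val * y.val : ℕ) : ℂ) / N)
        + 2 * Real.pi * Complex.I * ((x.val * y.val : ℕ) : ℂ) / N = 0 by ring,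
      Complex.exp_zero, mul_one]
  have hψsq : ∀ x : ZMod N, ψZ x ^ 2 * ω ^ ((x * x).val) = 1 := by
    intro x
    rw [hψZ]
    beta_reduce
    rw [ZMod.val_mul, hωmod, show x.val * x.val = x.val ^ 2 from (sq x.val).symm]
    exact gspPsi_sq hN0 x.val
  have hdF : (Matrix.of (fun j k : ZMod N => ω ^ ((j * k).val))).det ≠ 0 := by
    rw [gsp_detF hωmod]
    refine Finset.prod_ne_zero_iff.mpr fun i _ => Finset.prod_ne_zero_iff.mpr fun j hj => ?_
    rw [Finset.mem_Ioi, Fin.lt_def] at hj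
    have hjN : (j : ℕ) < N := j.isLt
    refine sub_ne_zero.mpr fun h => ?_
    have h2 : ω ^ (i : ℕ) * ω ^ ((j : ℕ) - (i : ℕ)) = ω ^ (i : ℕ) * 1 := by
      rw [← pow_add, mul_one, show (i : ℕ) + ((j : ℕ) - (i : ℕ)) = (j : ℕ) by omega]
      exact h
    exact gsp_omega_ne_one hN0 (by omega) (by omega) (mul_left_cancel₀ (pow_ne_zero _ hω) h2)
  rw [gsp_core hω hωmod (fun x => gspPsi_ne_zero _) hψadd hψsq hdF, gsp_detF hωmod]
  -- Step 3 : scalar computation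
  have hpsiprod : (∏ j : ZMod N, gspPsi N j.val) ^ 2 = (ω ^ (∑ a ∈ Finset.range N, a ^ 2))⁻¹ := by
    rw [← Finset.prod_pow]
    have h1 : ∏ j : ZMod N, gspPsi N j.val ^ 2 = ∏ a ∈ Finset.range N, gspPsi N a ^ 2 := by
      refine Finset.prod_nbij' (fun x : ZMod N => x.val) (fun a => ((a : ℕ) : ZMod N))
        (fun x _ => Finset.mem_range.mpr x.val_lt) (fun a _ => Finset.mem_univ _)
        (fun x _ => hval_cast x) (fun a ha => ZMod.val_cast_of_lt (Finset.mem_range.mp ha))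
        (fun x _ => rfl)
    rw [h1, Finset.prod_congr rfl
        (fun a _ => eq_inv_of_mul_eq_one_left (gspPsi_sq hN0 a) : ∀ a ∈ Finset.range N,
          gspPsi N a ^ 2 = (ω ^ (a ^ 2))⁻¹),
      Finset.prod_inv_distrib, Finset.prod_pow_eq_pow_sum]
  have hT : ∏ i : Fin N, ∏ j ∈ Finset.Ioi i, (ω ^ (j : ℕ) - ω ^ (i : ℕ))
      = ((-1 : ℂ) ^ (∑ i ∈ Finset.range N, (N - 1 - i))
          * ω ^ (∑ i ∈ Finset.range N, i * (N - 1 - i)))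
        * ∏ d ∈ Finset.Ico 1 N, (1 - ω ^ d) ^ (N - d) := by
    have hper : ∀ i : Fin N, ∏ j ∈ Finset.Ioi i, (ω ^ (j : ℕ) - ω ^ (i : ℕ))
        = ((-1 : ℂ) * ω ^ (i : ℕ)) ^ (N - 1 - (i : ℕ))
          * ∏ d ∈ Finset.Ico 1 (N - (i : ℕ)), (1 - ω ^ d) := by
      intro i
      have h3 : ∀ j ∈ Finset.Ioi i, ω ^ (j : ℕ) - ω ^ (i : ℕ)
          = ((-1 : ℂ) * ω ^ (i : ℕ)) * (1 - ω ^ ((j : ℕ) - (i : ℕ))) := by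
        intro j hj
        rw [Finset.mem_Ioi, Fin.lt_def] at hj
        have hjN : (j : ℕ) < N := j.isLt
        have h4 : ω ^ (i : ℕ) * ω ^ ((j : ℕ) - (i : ℕ)) = ω ^ (j : ℕ) := by
          rw [← pow_add]
          congr 1
          omega
        calc ω ^ (j : ℕ) - ω ^ (i : ℕ)
            = ω ^ (i : ℕ) * ω ^ ((j : ℕ) - (i : ℕ)) - ω ^ (i : ℕ) := by rw [h4]
          _ = ((-1 : ℂ) * ω ^ (i : ℕ)) * (1 - ω ^ ((j : ℕ) - (i : ℕ))) := by ring
      rw [Finset.prod_congr rfl h3, Finset.prod_mul_distrib, Finset.prod_const, Fin.card_Ioi,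
        gsp_inner (fun d => 1 - ω ^ d) i]
    rw [Finset.prod_congr rfl (fun i _ => hper i), Finset.prod_mul_distrib]
    congr 1
    · rw [Fin.prod_univ_eq_prod_range (fun i => ((-1 : ℂ) * ω ^ i) ^ (N - 1 - i)) N]
      rw [Finset.prod_congr rfl (fun i _ => by rw [mul_pow, ← pow_mul] :
        ∀ i ∈ Finset.range N, ((-1 : ℂ) * ω ^ i) ^ (N - 1 - i)
          = (-1 : ℂ) ^ (N - 1 - i) * ω ^ (i * (N - 1 - i))),
        Finset.prod_mul_distrib, Finset.prod_pow_eq_pow_sum, Finset.prod_pow_eq_pow_sum]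
    · rw [Fin.prod_univ_eq_prod_range (fun i => ∏ d ∈ Finset.Ico 1 (N - i), (1 - ω ^ d)) N,
        gsp_swap]
  have hW : ∏ d ∈ Finset.Ico 1 N, (1 - ω ^ d) ^ (N - d)
      = ((-1 : ℂ) ^ (∑ d ∈ Finset.Ico 1 N, (N - d))
          * ω ^ (∑ d ∈ Finset.Ico 1 N, d * (N - d)))
        * ∏ n ∈ Finset.Ico 1 N, (1 - ω ^ n) ^ n := by
    have h5 : ∀ d ∈ Finset.Ico 1 N, (1 - ω ^ d) ^ (N - d)
        = ((-1 : ℂ) ^ (N - d) * ω ^ (d * (N - d))) * (1 - ω ^ (N - d)) ^ (N - d) := by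
      intro d hd
      rw [Finset.mem_Ico] at hd
      have h7 : ω ^ d * ω ^ (N - d) = 1 := by
        rw [← pow_add, show d + (N - d) = N by omega]
        exact gsp_omega_N hN0
      have h6 : (1 : ℂ) - ω ^ d = ((-1) * ω ^ d) * (1 - ω ^ (N - d)) := by
        calc (1 : ℂ) - ω ^ d = ω ^ d * ω ^ (N - d) - ω ^ d := by rw [h7]
          _ = ((-1) * ω ^ d) * (1 - ω ^ (N - d)) := by ring
      rw [h6, mul_pow, mul_pow, ← pow_mul]
    rw [Finset.prod_congr rfl h5, Finset.prod_mul_distrib, Finset.prod_mul_distrib,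
      Finset.prod_pow_eq_pow_sum, Finset.prod_pow_eq_pow_sum,
      gsp_reflect N (fun d => 1 - ω ^ d)]
  rw [hpsiprod, hT, hW, gsp_PS N hN]
  have hev : (-1 : ℂ) ^ (∑ d ∈ Finset.Ico 1 N, (N - d))
      * (-1 : ℂ) ^ (∑ d ∈ Finset.Ico 1 N, (N - d)) = 1 := by
    rw [← pow_add]
    exact Even.neg_one_pow ⟨_, rfl⟩
  have hAB : ω ^ (∑ i ∈ Finset.range N, i * (N - 1 - i)) * ω ^ (∑ d ∈ Finset.Ico 1 N, d * (N - d))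
      = ω ^ (∑ a ∈ Finset.range N, a ^ 2) := by
    rw [← pow_add, gsp_ABQ N hN]
  rw [show (ω ^ (∑ a ∈ Finset.range N, a ^ 2))⁻¹
      * (((-1 : ℂ) ^ (∑ d ∈ Finset.Ico 1 N, (N - d))
          * ω ^ (∑ i ∈ Finset.range N, i * (N - 1 - i)))
        * (((-1 : ℂ) ^ (∑ d ∈ Finset.Ico 1 N, (N - d))
            * ω ^ (∑ d ∈ Finset.Ico 1 N, d * (N - d)))
          * ∏ n ∈ Finset.Ico 1 N, (1 - ω ^ n) ^ n))
      = ((ω ^ (∑ i ∈ Finset.range N, i * (N - 1 - i))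
            * ω ^ (∑ d ∈ Finset.Ico 1 N, d * (N - d)))
          * (ω ^ (∑ a ∈ Finset.range N, a ^ 2))⁻¹)
        * (((-1 : ℂ) ^ (∑ d ∈ Finset.Ico 1 N, (N - d))
            * (-1 : ℂ) ^ (∑ d ∈ Finset.Ico 1 N, (N - d)))
          * ∏ n ∈ Finset.Ico 1 N, (1 - ω ^ n) ^ n) from by ring,
    hAB, hev, mul_inv_cancel₀ (pow_ne_zero _ hω), one_mul, one_mul]
end

section
/- Define G_p = ∏_{n=0}^{N-1} ∑_{a=0}^{N-1} ω^{na}/(Φ(a) W_p(a)) for a Fermat point p = (x,y). Then G_{(ωx,y)}/G_{(x,y)} = (y/(1-ωx))^N. -/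
open Finset

lemma G_ratio_prod_aux (N : ℕ) (hN : N ≠ 0) (q : ℂ) (hq : IsPrimitiveRoot q N) (A B : ℂ) :
    ∏ j ∈ Finset.range N, (A - B * q ^ j) = A ^ N - B ^ N := by
  have h := X_pow_sub_C_eq_prod hq (Nat.pos_of_ne_zero hN) (rfl : B ^ N = B ^ N)
  have h2 := congrArg (Polynomial.eval A) h
  simp only [Polynomial.eval_sub, Polynomial.eval_pow, Polynomial.eval_X, Polynomial.eval_C,
    Polynomial.eval_prod] at h2
  rw [show (∏ j ∈ Finset.range N, (A - B * q ^ j)) = ∏ j ∈ Finset.range N, (A - q ^ j * B) from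
    Finset.prod_congr rfl fun j _ => by ring]
  exact h2.symm

lemma G_ratio_aux (N : ℕ) (hN : 2 ≤ N) (x y ε : ℂ) (hεne : ε ≠ 0) (hεN : ε ^ N = -1)
    (hq : IsPrimitiveRoot (ε ^ 2) N)
    (hferm : x ^ N + y ^ N = 1) (hy : y ≠ 0)
    (hx : ∀ n : ℕ, 1 - ε ^ (2 * n) * x ≠ 0)
    (Φ W W' : ℕ → ℂ)
    (hΦ0 : Φ 0 = 1) (hΦsucc : ∀ a : ℕ, Φ (a + 1) = -(ε ^ (2 * a + 1)) * Φ a)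
    (hΦN1 : Φ (N - 1) = -ε) (hΦN : Φ N = 1) (hΦne : ∀ a, Φ a ≠ 0)
    (hW0 : W 0 = 1) (hW'0 : W' 0 = 1)
    (hWrec : ∀ a : ℕ, W (a + 1) = W a * (y / (1 - ε ^ (2 * (a + 1)) * x)))
    (hW'rec : ∀ a : ℕ, W' (a + 1) = W' a * (y / (1 - ε ^ (2 * (a + 2)) * x))) :
    (∏ n ∈ Finset.range N, ∑ a ∈ Finset.range N, ε ^ (2 * (n * a)) / (Φ a * W' a))
      / (∏ n ∈ Finset.range N, ∑ a ∈ Finset.range N, ε ^ (2 * (n * a)) / (Φ a * W a))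
      = (y / (1 - ε ^ 2 * x)) ^ N := by
  have hN0 : N ≠ 0 := by omega
  have hNC : (N : ℂ) ≠ 0 := Nat.cast_ne_zero.mpr hN0
  have hε2N : ε ^ (2 * N) = 1 := by rw [pow_mul]; exact hq.pow_eq_one
  have h1x : (1 : ℂ) - x ≠ 0 := by simpa using hx 0
  have h1εx : (1 : ℂ) - ε ^ 2 * x ≠ 0 := by simpa using hx 1
  -- multiplicative recurrences
  have hWsucc : ∀ a : ℕ, W (a + 1) * (1 - ε ^ (2 * (a + 1)) * x) = W a * y := by
    intro a; rw [hWrec a]; field_simp [hx (a+1)]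
  have hW'succ : ∀ a : ℕ, W' (a + 1) * (1 - ε ^ (2 * (a + 2)) * x) = W' a * y := by
    intro a; rw [hW'rec a]; field_simp [hx (a+2)]
  have hWne : ∀ a, W a ≠ 0 := by
    intro a; induction a with
    | zero => rw [hW0]; exact one_ne_zero
    | succ a ih =>
      intro h
      have := hWsucc a
      rw [h, zero_mul] at this
      exact mul_ne_zero ih hy this.symm
  have hW'ne : ∀ a, W' a ≠ 0 := by
    intro a; induction a with
    | zero => rw [hW'0]; exact one_ne_zero
    | succ a ih =>
      intro h
      have := hW'succ a
      rw [h, zero_mul] at this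
      exact mul_ne_zero ih hy this.symm
  -- W' in terms of W
  have hW'W : ∀ a : ℕ, y * W' a = (1 - ε ^ 2 * x) * W (a + 1) := by
    intro a; induction a with
    | zero =>
      rw [hW'0, mul_one]
      have := hWsucc 0
      rw [hW0, one_mul] at this
      rw [← this]; ring_nf
    | succ a ih =>
      have h1 := hWsucc (a + 1)
      have h2 := hW'succ a
      have hne : (1 - ε ^ (2 * (a + 2)) * x) ≠ 0 := hx (a + 2)
      apply mul_left_cancel₀ hne
      calc (1 - ε ^ (2 * (a + 2)) * x) * (y * W' (a + 1))
          = y * (W' (a + 1) * (1 - ε ^ (2 * (a + 2)) * x)) := by ring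
        _ = y * (W' a * y) := by rw [h2]
        _ = y * W' a * y := by ring
        _ = (1 - ε ^ 2 * x) * W (a + 1) * y := by rw [ih]
        _ = (1 - ε ^ 2 * x) * (W (a + 1) * y) := by ring
        _ = (1 - ε ^ 2 * x) * (W (a + 1 + 1) * (1 - ε ^ (2 * (a + 1 + 1)) * x)) := by rw [h1]
        _ = (1 - ε ^ (2 * (a + 2)) * x) * ((1 - ε ^ 2 * x) * W (a + 1 + 1)) := by ring
  -- c_a = 1/(Φ a W a)
  set c : ℕ → ℂ := fun a => (Φ a * W a)⁻¹ with hcdef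
  have hDne : ∀ a, Φ a * W a ≠ 0 := fun a => mul_ne_zero (hΦne a) (hWne a)
  have hcne : ∀ a, c a ≠ 0 := fun a => inv_ne_zero (hDne a)
  have hc0 : c 0 = 1 := by rw [hcdef]; simp [hΦ0, hW0]
  -- key one-step recurrence for c  (★)
  have hcrec : ∀ a : ℕ, ε ^ (2 * a + 1) * y * c (a + 1) = -c a + ε ^ (2 * a + 2) * x * c a := by
    intro a
    have E : ε ^ (2*a+1) * y * (Φ a * W a) = (-1 + ε ^ (2*a+2) * x) * (Φ (a+1) * W (a+1)) := by
      rw [hΦsucc a]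
      linear_combination (-(ε ^ (2*a+1)) * Φ a) * hWsucc a
    have h1 : c (a+1) * (Φ (a+1) * W (a+1)) = 1 := inv_mul_cancel₀ (hDne (a+1))
    have h2 : c a * (Φ a * W a) = 1 := inv_mul_cancel₀ (hDne a)
    apply mul_right_cancel₀ (hDne a)
    apply mul_right_cancel₀ (hDne (a+1))
    linear_combination (ε ^ (2*a+1) * y * (Φ a * W a)) * h1
      + ((1 - ε ^ (2*a+2) * x) * (Φ (a+1) * W (a+1))) * h2 + E
  -- product formula for W
  have hWprod : ∀ a : ℕ, W a * ∏ j ∈ Finset.range a, (1 - ε ^ (2 * (j + 1)) * x) = y ^ a := by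
    intro a; induction a with
    | zero => simp [hW0]
    | succ a ih =>
      rw [Finset.prod_range_succ, pow_succ]
      calc W (a+1) * ((∏ j ∈ Finset.range a, (1 - ε ^ (2 * (j + 1)) * x))
              * (1 - ε ^ (2 * (a + 1)) * x))
          = (W (a+1) * (1 - ε ^ (2 * (a + 1)) * x))
              * ∏ j ∈ Finset.range a, (1 - ε ^ (2 * (j + 1)) * x) := by ring
        _ = W a * y * ∏ j ∈ Finset.range a, (1 - ε ^ (2 * (j + 1)) * x) := by rw [hWsucc a]
        _ = (W a * ∏ j ∈ Finset.range a, (1 - ε ^ (2 * (j + 1)) * x)) * y := by ring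
        _ = y ^ a * y := by rw [ih]
  -- the full cyclotomic product
  have hyN : y ^ N = 1 - x ^ N := by linear_combination hferm
  have hprodall : ∏ j ∈ Finset.range N, (1 - ε ^ (2 * j) * x) = y ^ N := by
    have h := G_ratio_prod_aux N hN0 (ε ^ 2) hq 1 x
    rw [one_pow] at h
    rw [← hyN] at h
    rw [← h]
    apply Finset.prod_congr rfl
    intro j _
    rw [← pow_mul]
    ring
  -- W(N-1) * y = 1 - x
  have hWN1 : W (N - 1) * y = 1 - x := by
    have h1 : W (N-1) * ∏ j ∈ Finset.range (N-1), (1 - ε ^ (2 * (j + 1)) * x) = y ^ (N-1) :=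
      hWprod (N-1)
    have h2 := Finset.prod_range_succ' (fun j => 1 - ε ^ (2 * j) * x) (N - 1)
    rw [show N - 1 + 1 = N by omega] at h2
    have h3 : (∏ j ∈ Finset.range (N-1), (1 - ε ^ (2 * (j + 1)) * x)) * (1 - x) = y ^ N := by
      rw [← hprodall, h2]; norm_num
    have h4 : W (N-1) * y ^ N = y ^ (N-1) * (1 - x) := by
      calc W (N-1) * y ^ N
          = (W (N-1) * ∏ j ∈ Finset.range (N-1), (1 - ε ^ (2 * (j + 1)) * x)) * (1 - x) := by
            rw [← h3]; ring
        _ = y ^ (N-1) * (1 - x) := by rw [h1]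
    have h5 : y ^ N = y ^ (N-1) * y := by rw [← pow_succ, show N - 1 + 1 = N by omega]
    have h6 : y ^ (N-1) ≠ 0 := pow_ne_zero _ hy
    apply mul_left_cancel₀ h6
    calc y ^ (N-1) * (W (N-1) * y) = W (N-1) * (y ^ (N-1) * y) := by ring
      _ = W (N-1) * y ^ N := by rw [← h5]
      _ = y ^ (N-1) * (1 - x) := h4
  have hWN : W N = 1 := by
    have h1 := hWsucc (N - 1)
    rw [show N - 1 + 1 = N by omega] at h1
    rw [hWN1] at h1
    rw [hε2N] at h1
    rw [one_mul] at h1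
    exact mul_right_cancel₀ h1x (by rw [h1, one_mul])
  have hcN : c N = 1 := by rw [hcdef]; simp [hΦN, hWN]
  have hcN1y : ε * (x - 1) * c (N - 1) = y := by
    rw [hcdef]
    simp only [hΦN1]
    rw [eq_comm]
    field_simp [hWne (N-1)]
    linear_combination hWN1
  -- c' for the shifted point
  set c' : ℕ → ℂ := fun a => (Φ a * W' a)⁻¹ with hc'def
  have hD'ne : ∀ a, Φ a * W' a ≠ 0 := fun a => mul_ne_zero (hΦne a) (hW'ne a)
  -- the sums
  set S : ℕ → ℂ := fun n => ∑ a ∈ Finset.range N, ε ^ (2 * (n * a)) * c a with hSdef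
  set S' : ℕ → ℂ := fun n => ∑ a ∈ Finset.range N, ε ^ (2 * (n * a)) * c' a with hS'def
  have hSP : (∏ n ∈ Finset.range N, ∑ a ∈ Finset.range N, ε ^ (2 * (n * a)) / (Φ a * W a))
      = ∏ n ∈ Finset.range N, S n := by
    apply Finset.prod_congr rfl; intro n _
    rw [hSdef]; apply Finset.sum_congr rfl; intro a _
    rw [hcdef]; exact div_eq_mul_inv _ _
  have hS'P : (∏ n ∈ Finset.range N, ∑ a ∈ Finset.range N, ε ^ (2 * (n * a)) / (Φ a * W' a))
      = ∏ n ∈ Finset.range N, S' n := by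
    apply Finset.prod_congr rfl; intro n _
    rw [hS'def]; apply Finset.sum_congr rfl; intro a _
    rw [hc'def]; exact div_eq_mul_inv _ _
  -- recurrence (ii) : (y - x ε^{2n+3}) S_{n+1} + ε^{2n+1} S_n = 0
  have hrec : ∀ n : ℕ, (y - x * ε ^ (2*n+3)) * S (n+1) + ε ^ (2*n+1) * S n = 0 := by
    intro n
    rw [hSdef]
    simp only []
    rw [Finset.mul_sum, Finset.mul_sum, ← Finset.sum_add_distrib]
    set G : ℕ → ℂ := fun b => (x * ε ^ (2*(n+1)*(b+1)+1) - ε ^ (2*n*(b+1)+1)) * c b with hGdef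
    have key : ∀ a : ℕ, (y - x * ε ^ (2*n+3)) * (ε ^ (2 * ((n+1) * (a+1))) * c (a+1))
        + ε ^ (2*n+1) * (ε ^ (2 * (n * (a+1))) * c (a+1)) = G a - G (a+1) := by
      intro a
      apply mul_left_cancel₀ (pow_ne_zero (2*a+1) hεne)
      rw [hGdef]
      simp only []
      linear_combination (ε ^ (2*(n+1)*(a+1))) * hcrec a
    have hsplit := Finset.sum_range_succ' (fun a => (y - x * ε ^ (2*n+3))
        * (ε ^ (2 * ((n+1) * a)) * c a) + ε ^ (2*n+1) * (ε ^ (2 * (n * a)) * c a)) (N-1)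
    rw [show N - 1 + 1 = N by omega] at hsplit
    rw [hsplit]
    have htel : (∑ a ∈ Finset.range (N-1), ((y - x * ε ^ (2*n+3))
          * (ε ^ (2 * ((n+1) * (a+1))) * c (a+1)) + ε ^ (2*n+1) * (ε ^ (2 * (n * (a+1))) * c (a+1))))
        = G 0 - G (N-1) := by
      rw [Finset.sum_congr rfl (fun a _ => key a)]
      exact Finset.sum_range_sub' G (N-1)
    rw [htel]
    have e1 : ε ^ (2*(n+1)*((N-1)+1)+1) = ε := by
      rw [show N - 1 + 1 = N by omega, show 2*(n+1)*N+1 = (2*N)*(n+1)+1 by ring,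
        pow_succ, pow_mul, hε2N, one_pow, one_mul]
    have e2 : ε ^ (2*n*((N-1)+1)+1) = ε := by
      rw [show N - 1 + 1 = N by omega, show 2*n*N+1 = (2*N)*n+1 by ring,
        pow_succ, pow_mul, hε2N, one_pow, one_mul]
    have hGN1 : G (N-1) = y := by
      rw [hGdef]
      simp only []
      rw [e1, e2]
      linear_combination hcN1y
    have hG0 : G 0 = x * ε ^ (2*n+3) - ε ^ (2*n+1) := by
      rw [hGdef]
      simp only []
      rw [hc0, mul_one, show 2*(n+1)*(0+1)+1 = 2*n+3 by ring, show 2*n*(0+1)+1 = 2*n+1 by ring]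
    rw [hGN1, hG0, hc0]
    ring
  -- shift relation (i) : ε^{2n+1}(1-ε²x) S'_n + y S_{n+1} = 0
  have hshift : ∀ n : ℕ, ε ^ (2*n+1) * ((1 - ε ^ 2 * x) * S' n) + y * S (n+1) = 0 := by
    intro n
    have keyA : ∀ a : ℕ, ε ^ (2*n+1) * ((1 - ε ^ 2 * x) * (ε ^ (2 * (n * a)) * c' a))
        = -(y * (ε ^ (2 * ((n+1) * (a+1))) * c (a+1))) := by
      intro a
      have E2 : ε ^ (2*n+1) * (1 - ε ^ 2 * x) * ε ^ (2*(n*a)) * (Φ (a+1) * W (a+1))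
          = -(y * ε ^ (2*((n+1)*(a+1)))) * (Φ a * W' a) := by
        rw [hΦsucc a]
        linear_combination (ε ^ (2*((n+1)*(a+1))) * Φ a) * hW'W a
      have h1 : c' a * (Φ a * W' a) = 1 := inv_mul_cancel₀ (hD'ne a)
      have h2 : c (a+1) * (Φ (a+1) * W (a+1)) = 1 := inv_mul_cancel₀ (hDne (a+1))
      apply mul_right_cancel₀ (hD'ne a)
      apply mul_right_cancel₀ (hDne (a+1))
      linear_combination (ε ^ (2*n+1) * (1 - ε ^ 2 * x) * ε ^ (2*(n*a)) * (Φ (a+1) * W (a+1))) * h1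
        + (y * ε ^ (2*((n+1)*(a+1))) * (Φ a * W' a)) * h2 + E2
    rw [hSdef, hS'def]
    simp only []
    rw [Finset.mul_sum, Finset.mul_sum, Finset.mul_sum]
    rw [Finset.sum_congr rfl (fun a (_ : a ∈ Finset.range N) => keyA a)]
    set Hf : ℕ → ℂ := fun b => y * (ε ^ (2 * ((n+1) * b)) * c b) with hHdef
    have hA := Finset.sum_range_succ' Hf N
    have hB := Finset.sum_range_succ Hf N
    have hHN : Hf N = y := by
      rw [hHdef]
      simp only []
      rw [hcN, show 2*((n+1)*N) = (2*N)*(n+1) by ring, pow_mul, hε2N, one_pow]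
      ring
    have hH0 : Hf 0 = y := by
      rw [hHdef]
      simp only []
      rw [hc0]
      norm_num
    have hswap : ∑ a ∈ Finset.range N, Hf (a+1) = ∑ a ∈ Finset.range N, Hf a := by
      have := hA.symm.trans hB
      rw [hHN, hH0] at this
      linear_combination this
    calc (∑ a ∈ Finset.range N, -(y * (ε ^ (2 * ((n+1) * (a+1))) * c (a+1))))
          + ∑ a ∈ Finset.range N, y * (ε ^ (2 * ((n+1) * a)) * c a)
        = -(∑ a ∈ Finset.range N, Hf (a+1)) + ∑ a ∈ Finset.range N, Hf a := by
          rw [← Finset.sum_neg_distrib]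
      _ = 0 := by rw [hswap]; ring
  -- orthogonality : sum of S over n equals N
  have hsum : ∑ n ∈ Finset.range N, S n = (N : ℂ) := by
    rw [hSdef]
    simp only []
    rw [Finset.sum_comm]
    have hterm : ∀ a ∈ Finset.range N, (∑ n ∈ Finset.range N, ε ^ (2 * (n * a)) * c a)
        = if a = 0 then (N : ℂ) else 0 := by
      intro a ha
      by_cases h0 : a = 0
      · subst h0
        simp only [Nat.mul_zero, pow_zero, hc0, mul_one, if_pos]
        rw [Finset.sum_const, Finset.card_range, nsmul_eq_mul, mul_one]
      · rw [if_neg h0]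
        have hne1 : (ε ^ 2) ^ a ≠ 1 :=
          hq.pow_ne_one_of_pos_of_lt h0 (Finset.mem_range.mp ha)
        have hgeom : ∑ n ∈ Finset.range N, ((ε ^ 2) ^ a) ^ n = 0 := by
          rw [geom_sum_eq hne1]
          rw [← pow_mul, show a * N = N * a by ring, pow_mul, hq.pow_eq_one, one_pow]
          simp
        calc ∑ n ∈ Finset.range N, ε ^ (2 * (n * a)) * c a
            = (∑ n ∈ Finset.range N, ((ε ^ 2) ^ a) ^ n) * c a := by
              rw [Finset.sum_mul]
              apply Finset.sum_congr rfl
              intro n _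
              rw [← pow_mul, ← pow_mul, Nat.mul_comm a n]
          _ = 0 := by rw [hgeom, zero_mul]
    rw [Finset.sum_congr rfl hterm]
    simp only [Finset.sum_ite_eq', Finset.mem_range]
    rw [if_pos (Nat.pos_of_ne_zero hN0)]
  -- denominators of the recurrence never vanish
  have hdenne : ∀ n : ℕ, y - x * ε ^ (2*n+3) ≠ 0 := by
    intro n h
    have hyx : y = x * ε ^ (2*n+3) := by linear_combination h
    have hpow : (ε ^ (2*n+3)) ^ N = -1 := by
      rw [← pow_mul, show (2*n+3) * N = N * (2*n+3) by ring, pow_mul, hεN]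
      exact Odd.neg_one_pow ⟨n+1, by ring⟩
    have hzero : x ^ N + y ^ N = 0 := by rw [hyx, mul_pow, hpow]; ring
    rw [hferm] at hzero
    exact one_ne_zero hzero
  -- nonvanishing of all S n
  have hallzero : S 0 = 0 → ∀ n, S n = 0 := by
    intro h0 n
    induction n with
    | zero => exact h0
    | succ n ih =>
      have h := hrec n
      rw [ih, mul_zero, add_zero] at h
      exact (mul_eq_zero.mp h).resolve_left (hdenne n)
  have hS0ne : S 0 ≠ 0 := by
    intro h0
    have hz : ∑ n ∈ Finset.range N, S n = 0 := Finset.sum_eq_zero fun n _ => hallzero h0 n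
    rw [hsum] at hz
    exact hNC hz
  have hSne : ∀ n, S n ≠ 0 := by
    intro n
    induction n with
    | zero => exact hS0ne
    | succ n ih =>
      intro h
      have hr := hrec n
      rw [h, mul_zero, zero_add] at hr
      exact ih ((mul_eq_zero.mp hr).resolve_left (pow_ne_zero _ hεne))
  -- combined per-n relation
  have hmain : ∀ n : ℕ, (1 - ε ^ 2 * x) * ((y - x * ε ^ (2*n+3)) * S' n) = y * S n := by
    intro n
    apply mul_left_cancel₀ (pow_ne_zero (2*n+1) hεne)
    linear_combination (y - x * ε ^ (2*n+3)) * hshift n - y * hrec n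
  -- product computations
  have hdenprod : ∏ n ∈ Finset.range N, (y - x * ε ^ (2*n+3)) = 1 := by
    have h := G_ratio_prod_aux N hN0 (ε ^ 2) hq y (x * ε ^ 3)
    have h3 : (x * ε ^ 3) ^ N = -(x ^ N) := by
      rw [mul_pow, ← pow_mul, show 3 * N = N * 3 by ring, pow_mul, hεN]
      ring
    rw [h3] at h
    have h4 : ∏ n ∈ Finset.range N, (y - x * ε ^ (2*n+3))
        = ∏ j ∈ Finset.range N, (y - x * ε ^ 3 * (ε ^ 2) ^ j) := by
      apply Finset.prod_congr rfl
      intro j _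
      rw [← pow_mul, show x * ε ^ 3 * ε ^ (2*j) = x * ε ^ (2*j+3) by rw [pow_add]; ring]
    rw [h4, h]
    linear_combination hferm
  have hprodmain : ∏ n ∈ Finset.range N, ((1 - ε ^ 2 * x) * ((y - x * ε ^ (2*n+3)) * S' n))
      = ∏ n ∈ Finset.range N, (y * S n) := Finset.prod_congr rfl fun n _ => hmain n
  have hfactor : (1 - ε ^ 2 * x) ^ N * ∏ n ∈ Finset.range N, S' n
      = y ^ N * ∏ n ∈ Finset.range N, S n := by
    have e1 : ∏ n ∈ Finset.range N, ((1 - ε ^ 2 * x) * ((y - x * ε ^ (2*n+3)) * S' n))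
        = (1 - ε ^ 2 * x) ^ N * ((∏ n ∈ Finset.range N, (y - x * ε ^ (2*n+3)))
            * ∏ n ∈ Finset.range N, S' n) := by
      rw [Finset.prod_mul_distrib, Finset.prod_mul_distrib, Finset.prod_const, Finset.card_range]
    have e2 : ∏ n ∈ Finset.range N, (y * S n) = y ^ N * ∏ n ∈ Finset.range N, S n := by
      rw [Finset.prod_mul_distrib, Finset.prod_const, Finset.card_range]
    rw [← e2, ← hprodmain, e1, hdenprod, one_mul]
  -- conclude
  rw [hSP, hS'P]
  have hPne : (∏ n ∈ Finset.range N, S n) ≠ 0 :=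
    Finset.prod_ne_zero_iff.mpr fun n _ => hSne n
  rw [div_pow, div_eq_div_iff hPne (pow_ne_zero N h1εx)]
  linear_combination hfactor
/-- With `G_p = ∏_{n=0}^{N-1} ∑_{a=0}^{N-1} ω^{na}/(Φ(a) W_p(a))` for a Fermat point
`p = (x,y)`, one has `G_{(ωx,y)}/G_{(x,y)} = (y/(1-ωx))^N`; here `ω = e^{2πi/N}`,
`Φ(a) = (-1)^a e^{πia²/N}`, and `W`, `W'` are the cyclic weights at `(x,y)`, `(ωx,y)`. -/
theorem G_ratio (N : ℕ) (hN : 2 ≤ N) (x y : ℂ)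
    (hferm : x ^ N + y ^ N = 1) (hy : y ≠ 0)
    (hx : ∀ n : ℕ, 1 - Complex.exp (2 * Real.pi * Complex.I / N) ^ n * x ≠ 0)
    (W W' : ℕ → ℂ) (hW0 : W 0 = 1) (hW'0 : W' 0 = 1)
    (hWrec : ∀ a : ℕ, W (a + 1) = W a
      * (y / (1 - Complex.exp (2 * Real.pi * Complex.I / N) ^ (a + 1) * x)))
    (hW'rec : ∀ a : ℕ, W' (a + 1) = W' a
      * (y / (1 - Complex.exp (2 * Real.pi * Complex.I / N) ^ (a + 1)
          * (Complex.exp (2 * Real.pi * Complex.I / N) * x)))) :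
    (∏ n ∈ Finset.range N, ∑ a ∈ Finset.range N,
        Complex.exp (2 * Real.pi * Complex.I / N) ^ (n * a)
          / (((-1 : ℂ) ^ a * Complex.exp (Real.pi * Complex.I * (a : ℂ) ^ 2 / N)) * W' a))
      / (∏ n ∈ Finset.range N, ∑ a ∈ Finset.range N,
        Complex.exp (2 * Real.pi * Complex.I / N) ^ (n * a)
          / (((-1 : ℂ) ^ a * Complex.exp (Real.pi * Complex.I * (a : ℂ) ^ 2 / N)) * W a))
      = (y / (1 - Complex.exp (2 * Real.pi * Complex.I / N) * x)) ^ N := by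
  have hN0 : N ≠ 0 := by omega
  have hNC : (N : ℂ) ≠ 0 := Nat.cast_ne_zero.mpr hN0
  set ε : ℂ := Complex.exp (Real.pi * Complex.I / N) with hεdef
  have hεne : ε ≠ 0 := Complex.exp_ne_zero _
  have hq2 : Complex.exp (2 * Real.pi * Complex.I / N) = ε ^ 2 := by
    rw [hεdef, ← Complex.exp_nat_mul]
    congr 1
    push_cast
    ring
  have hεN : ε ^ N = -1 := by
    rw [hεdef, ← Complex.exp_nat_mul,
      show (N : ℂ) * (Real.pi * Complex.I / N) = Real.pi * Complex.I by field_simp]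
    exact Complex.exp_pi_mul_I
  have hq : IsPrimitiveRoot (ε ^ 2) N := hq2 ▸ Complex.isPrimitiveRoot_exp N hN0
  have hΦε : ∀ a : ℕ, Complex.exp (Real.pi * Complex.I * (a : ℂ) ^ 2 / N) = ε ^ (a ^ 2) := by
    intro a
    rw [hεdef, ← Complex.exp_nat_mul]
    congr 1
    push_cast
    ring
  set Φ : ℕ → ℂ := fun a => (-1 : ℂ) ^ a * ε ^ (a ^ 2) with hΦdef
  have hΦ0 : Φ 0 = 1 := by simp [hΦdef]
  have hΦsucc : ∀ a : ℕ, Φ (a + 1) = -(ε ^ (2 * a + 1)) * Φ a := by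
    intro a
    simp only [hΦdef]
    ring
  have hΦN : Φ N = 1 := by
    simp only [hΦdef]
    rw [show N ^ 2 = N * N by ring, pow_mul, hεN, ← mul_pow]
    norm_num
  have hΦN1 : Φ (N - 1) = -ε := by
    obtain ⟨M, rfl⟩ : ∃ M, N = M + 2 := ⟨N - 2, by omega⟩
    have e1 : ε ^ (2 * (M + 2)) = 1 := by
      rw [show 2 * (M + 2) = (M + 2) * 2 by ring, pow_mul, hεN]
      norm_num
    have e2 : ε ^ ((M + 1) ^ 2) * ε ^ (2 * (M + 2)) = (-1 : ℂ) ^ (M + 2) * ε := by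
      rw [← pow_add, show (M + 1) ^ 2 + 2 * (M + 2) = (M + 2) * (M + 2) + 1 by ring,
        pow_add, pow_mul, hεN, pow_one]
    rw [e1, mul_one] at e2
    simp only [hΦdef]
    rw [show M + 2 - 1 = M + 1 by omega, e2]
    have e3 : (-1 : ℂ) ^ (M + 1) * (-1 : ℂ) ^ (M + 2) = -1 := by
      rw [← pow_add]
      exact Odd.neg_one_pow ⟨M + 1, by ring⟩
    linear_combination ε * e3
  have hΦne : ∀ a, Φ a ≠ 0 := fun a =>
    mul_ne_zero (pow_ne_zero _ (by norm_num)) (pow_ne_zero _ hεne)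
  have hx' : ∀ n : ℕ, 1 - ε ^ (2 * n) * x ≠ 0 := by
    intro n
    have h := hx n
    rw [hq2, ← pow_mul] at h
    exact h
  have hWrec' : ∀ a : ℕ, W (a + 1) = W a * (y / (1 - ε ^ (2 * (a + 1)) * x)) := by
    intro a
    have h := hWrec a
    rw [hq2, ← pow_mul] at h
    exact h
  have hW'rec' : ∀ a : ℕ, W' (a + 1) = W' a * (y / (1 - ε ^ (2 * (a + 2)) * x)) := by
    intro a
    have h := hW'rec a
    rw [hq2, ← mul_assoc, ← pow_succ, ← pow_mul] at h
    exact h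
  have H := G_ratio_aux N hN x y ε hεne hεN hq hferm hy hx' Φ W W'
    hΦ0 hΦsucc hΦN1 hΦN hΦne hW0 hW'0 hWrec' hW'rec'
  rw [hq2]
  simp only [← pow_mul, hΦε]
  exact H
end

section
/- The determinant of the N³×N³ permutation-type matrix P with entries ⟨i₁,i₂,i₃|P|j₁,j₂,j₃⟩ = δ_{i₂+i₃, j₂+j₃} δ_{i₁,-j₂} δ_{j₁,-i₂} Φ(j₃)/Φ(i₃) (indices in ℤ/N) equals (-1)^{N²(N-1)/2}. -/
/-!
Writing `D` for the diagonal matrix of the `Φ(i₃)` and `σ` for the involution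
`(a, b, c) ↦ (-b, -a, a + b + c)` of `(ℤ/N)³`, one has `P = D⁻¹ P_σ D`, so `det P = sign σ`.
The fixed points of `σ` are the `N²` triples with `a = -b`, so `σ` is a product of
`(N³ - N²)/2` disjoint transpositions.
-/

open Matrix

section MonomialMatrix

variable {n K : Type*} [Fintype n] [DecidableEq n] [Field K]

theorem of_ite_perm_div_eq (σ : Equiv.Perm n) (d : n → K) :
    of (fun i j => if σ i = j then d j / d i else 0) =
      diagonal (fun i => (d i)⁻¹) * σ.permMatrix K * diagonal d := by
  ext i j
  simp only [of_apply, mul_diagonal, diagonal_mul, Equiv.Perm.permMatrix, PEquiv.toMatrix_apply,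
    Equiv.toPEquiv_apply, Option.mem_def, Option.some.injEq]
  split_ifs
  · field_simp
  · simp

theorem det_of_ite_perm_div (σ : Equiv.Perm n) (d : n → K) (hd : ∀ i, d i ≠ 0) :
    det (of fun i j => if σ i = j then d j / d i else 0) = Equiv.Perm.sign σ := by
  rw [of_ite_perm_div_eq σ d, det_mul, det_mul, det_permutation, det_diagonal, det_diagonal,
    mul_right_comm, ← Finset.prod_mul_distrib]
  simp [hd]

end MonomialMatrix

section TwistedSwap

variable (A : Type*) [AddCommGroup A]

theorem twistedSwap_involutive :
    Function.Involutive fun x : A × A × A => (-x.2.1, -x.1, x.1 + x.2.1 + x.2.2) := by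
  rintro ⟨a, b, c⟩
  simp only [neg_neg, Prod.mk.injEq, true_and]
  abel

def twistedSwap : Equiv.Perm (A × A × A) :=
  (twistedSwap_involutive A).toPerm _

variable {A}

@[simp]
theorem twistedSwap_apply (a b c : A) : twistedSwap A (a, b, c) = (-b, -a, a + b + c) := rfl

theorem twistedSwap_eq_iff (i j : A × A × A) :
    twistedSwap A i = j ↔ i.2.1 + i.2.2 = j.2.1 + j.2.2 ∧ i.1 = -j.2.1 ∧ j.1 = -i.2.1 := by
  obtain ⟨a, b, c⟩ := i
  obtain ⟨x, y, z⟩ := j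
  simp only [twistedSwap_apply, Prod.mk.injEq]
  constructor
  · rintro ⟨rfl, rfl, rfl⟩
    refine ⟨?_, by simp, rfl⟩
    abel
  · rintro ⟨h, rfl, rfl⟩
    refine ⟨rfl, by simp, ?_⟩
    rw [add_assoc, h]
    abel

theorem twistedSwap_isFixedPt_iff (x : A × A × A) :
    Function.IsFixedPt (twistedSwap A) x ↔ x.1 = -x.2.1 := by
  rw [Function.IsFixedPt, twistedSwap_eq_iff]
  constructor
  · exact fun h => h.2.1
  · intro h
    exact ⟨rfl, h, by rw [h]⟩

variable [Fintype A] [DecidableEq A]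

theorem card_fixedPoints_twistedSwap :
    Fintype.card (Function.fixedPoints (twistedSwap A)) = Fintype.card A ^ 2 := by
  let e : Function.fixedPoints (twistedSwap A) ≃ A × A :=
    { toFun := fun x => x.1.2
      invFun := fun y => ⟨(-y.1, y), (twistedSwap_isFixedPt_iff _).2 rfl⟩
      left_inv := fun x => Subtype.ext <| Prod.ext ((twistedSwap_isFixedPt_iff _).1 x.2).symm rfl
      right_inv := fun _ => rfl }
  rw [Fintype.card_congr e, Fintype.card_prod, sq]

theorem sign_twistedSwap :
    Equiv.Perm.sign (twistedSwap A) = (-1) ^ (Fintype.card A ^ 2 * (Fintype.card A - 1) / 2) := by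
  have hsq : twistedSwap A ^ 2 = 1 :=
    Equiv.ext (twistedSwap_involutive A)
  rw [Equiv.Perm.sign_of_pow_two_eq_one hsq, card_fixedPoints_twistedSwap, Fintype.card_prod,
    Fintype.card_prod, Nat.mul_sub_one]
  ring_nf

end TwistedSwap

theorem det_P_general (N : ℕ) [NeZero N] :
    Matrix.det (Matrix.of (fun (i j : ZMod N × ZMod N × ZMod N) =>
      if i.2.1 + i.2.2 = j.2.1 + j.2.2 ∧ i.1 = -j.2.1 ∧ j.1 = -i.2.1 then
        ((-1 : ℂ) ^ (j.2.2.val) * Complex.exp (Real.pi * Complex.I * (j.2.2.val : ℂ) ^ 2 / N))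
          / ((-1 : ℂ) ^ (i.2.2.val) * Complex.exp (Real.pi * Complex.I * (i.2.2.val : ℂ) ^ 2 / N))
      else 0))
    = (-1 : ℂ) ^ (N ^ 2 * (N - 1) / 2) := by
  simp_rw [← twistedSwap_eq_iff]
  refine (det_of_ite_perm_div (twistedSwap (ZMod N))
    (fun i => (-1 : ℂ) ^ i.2.2.val * Complex.exp (Real.pi * Complex.I * (i.2.2.val : ℂ) ^ 2 / N))
    fun _ => mul_ne_zero (pow_ne_zero _ (by norm_num)) (Complex.exp_ne_zero _)).trans ?_
  rw [sign_twistedSwap, ZMod.card]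
  simp

/-- The `N³×N³` monomial matrix `P` with entries
`⟨i₁,i₂,i₃|P|j₁,j₂,j₃⟩ = δ_{i₂+i₃,j₂+j₃} δ_{i₁,-j₂} δ_{j₁,-i₂} Φ(j₃)/Φ(i₃)`
(indices in `ℤ/N`, `Φ(n) = (-1)^n e^{πin²/N}`) has determinant `(-1)^{N²(N-1)/2}`. -/
theorem det_P (N : ℕ) [NeZero N] (hN : 2 ≤ N) :
    Matrix.det (Matrix.of (fun (i j : ZMod N × ZMod N × ZMod N) =>
      if i.2.1 + i.2.2 = j.2.1 + j.2.2 ∧ i.1 = -j.2.1 ∧ j.1 = -i.2.1 then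
        ((-1 : ℂ) ^ (j.2.2.val) * Complex.exp (Real.pi * Complex.I * (j.2.2.val : ℂ) ^ 2 / N))
          / ((-1 : ℂ) ^ (i.2.2.val) * Complex.exp (Real.pi * Complex.I * (i.2.2.val : ℂ) ^ 2 / N))
      else 0))
    = (-1 : ℂ) ^ (N ^ 2 * (N - 1) / 2) :=
  det_P_general N
end

section
/- For the N=2 tetrahedron-product tensor Θ, the symmetry Θ_{i₁,i₂,i₃,0,0,0}^{k₁,...,k₆} = Θ_{a(i₁,i₂,i₃,0,0,0)}^{a(k₁,...,k₆)} holds, where a flips the first, second, and fourth indices mod 2: explicitly, the 8-term sum formula (eq. (Zwli)) for Θ is invariant under (i₁,i₂,i₃,i₄,i₅,i₆;k₁,...,k₆) → (i₁+1,i₂+1,i₃,i₄+1,i₅,i₆;k₁+1,k₂+1,k₃,k₄+1,k₅,k₆) after shifting the summation indices j₁,j₂,j₄ by 1 mod 2. -/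
open Finset

lemma neg_one_pow_val_add (a b : ZMod 2) :
    ((-1 : ℂ)) ^ a.val * (-1) ^ b.val = (-1) ^ ((a + b).val) := by
  rw [← pow_add, ZMod.val_add, ← neg_one_pow_eq_pow_mod_two]

lemma theta_step (d p A B sL xL sR xR : ℂ) (h : sL * xL = sR * xR) :
    d * sL * p * (xL * A / B) = d * sR * p * (xR * A / B) := by
  have e1 : d * sL * p * (xL * A / B) = (sL * xL) * (d * p * A / B) := by ring
  have e2 : d * sR * p * (xR * A / B) = (sR * xR) * (d * p * A / B) := by ring
  rw [e1, e2, h]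

/-- The `N = 2` tetrahedron-product tensor `Θ` (eq. (Zwli) of the paper), with
nonzero parameters `Y i j` (`i, j` zero-based: `Y 0 0 = Y₁₁`, etc.) and indices
in `ℤ/2`; all exponents are taken mod 2 via `ZMod.val`. -/
noncomputable def ThetaN2 (Y : Fin 4 → Fin 4 → ℂ)
    (i1 i2 i3 i4 i5 i6 k1 k2 k3 k4 k5 k6 : ZMod 2) : ℂ :=
  (if i4 + i5 + i6 = k4 + k5 + k6 then (1 : ℂ) else 0)
    * (-1 : ℂ) ^ ((k1 * (i4 + i5) + k2 * (i6 + k4) + (i2 + i3) * (i1 + k6)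
        + k3 * k6).val)
    * ((Y 0 0) ^ ((i2 + i1).val) * (Y 1 2) ^ ((k4 + k2).val)
        * (Y 1 3) ^ ((k5 + k3).val) / (Y 3 1) ^ ((i4 + k1).val))
    * ∑ j1 : ZMod 2, ∑ j2 : ZMod 2, ∑ j4 : ZMod 2,
        (-1 : ℂ) ^ ((j1 * j2 + j2 * j4 + j4 * j1 + j1 * (i2 + i3 + i4 + i5)
            + j2 * (i1 + i6 + k4 + k6) + j4 * (k1 + k2)).val)
          * ((Y 1 0) ^ ((j2 + j1).val) * (Y 0 1) ^ ((i4 + j1).val)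
              * (Y 1 1) ^ ((j4 + k1).val) * (Y 0 2) ^ ((j4 + j2).val)
              * (Y 0 3) ^ ((j4 + j2 + i2 + i3 + i4 + i5).val))
          / ((Y 2 0) ^ ((j2 + i1).val) * (Y 3 0) ^ ((i2 + j1).val)
              * (Y 2 1) ^ ((j4 + j1).val) * (Y 2 2) ^ ((k4 + j2).val)
              * (Y 3 2) ^ ((j4 + k2).val) * (Y 2 3) ^ ((k5 + i2 + i3 + j2).val)
              * (Y 3 3) ^ ((i4 + i5 + j4 + k3).val))

/-- Symmetry of the `N = 2` tensor `Θ` under the index map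
`a : (i₁,i₂,i₃,i₄,i₅,i₆) ↦ (i₁+1,i₂+1,i₃,i₄+1,i₅,i₆)` applied simultaneously
to the lower indices (with `i₄=i₅=i₆=0`) and the upper indices. -/
theorem ThetaN2_symmetry_a (Y : Fin 4 → Fin 4 → ℂ) (hY : ∀ i j, Y i j ≠ 0)
    (i1 i2 i3 k1 k2 k3 k4 k5 k6 : ZMod 2) :
    ThetaN2 Y i1 i2 i3 0 0 0 k1 k2 k3 k4 k5 k6
      = ThetaN2 Y (i1 + 1) (i2 + 1) i3 (0 + 1) 0 0
          (k1 + 1) (k2 + 1) k3 (k4 + 1) k5 k6 := by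
  unfold ThetaN2
  simp only [show ((0:ZMod 2) + 0 + 0 = k4 + k5 + k6) = ((0:ZMod 2) + 1 + 0 + 0 = k4 + 1 + k5 + k6)
    from by revert k4 k5 k6; decide]
  simp only [Finset.mul_sum]
  refine Fintype.sum_equiv (Equiv.addLeft 1) _ _ fun j1 => ?_
  refine Fintype.sum_equiv (Equiv.addLeft 1) _ _ fun j2 => ?_
  refine Fintype.sum_equiv (Equiv.addLeft 1) _ _ fun j4 => ?_
  simp only [Equiv.coe_addLeft]
  simp only [show (1 : ZMod 2) + j2 + (1 + j1) = j2 + j1 from by revert j1 j2; decide,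
    show (0:ZMod 2) + 1 + (1 + j1) = 0 + j1 from by revert j1; decide,
    show (1 : ZMod 2) + j4 + (k1 + 1) = j4 + k1 from by revert j4 k1; decide,
    show (1 : ZMod 2) + j4 + (1 + j2) = j4 + j2 from by revert j4 j2; decide,
    show (1 : ZMod 2) + j2 + (i1 + 1) = j2 + i1 from by revert j2 i1; decide,
    show (i2 : ZMod 2) + 1 + (1 + j1) = i2 + j1 from by revert i2 j1; decide,
    show (1 : ZMod 2) + j4 + (1 + j1) = j4 + j1 from by revert j4 j1; decide,
    show (k4 : ZMod 2) + 1 + (1 + j2) = k4 + j2 from by revert k4 j2; decide,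
    show (1 : ZMod 2) + j4 + (k2 + 1) = j4 + k2 from by revert j4 k2; decide,
    show (i2 : ZMod 2) + 1 + (i1 + 1) = i2 + i1 from by revert i2 i1; decide,
    show (k4 : ZMod 2) + 1 + (k2 + 1) = k4 + k2 from by revert k4 k2; decide,
    show (0 : ZMod 2) + 1 + (k1 + 1) = 0 + k1 from by revert k1; decide]
  simp only [show (j4 : ZMod 2) + j2 + (i2 + 1) + i3 + (0 + 1) + 0 = j4 + j2 + i2 + i3 + 0 + 0
      from by revert j4 j2 i2 i3; decide,
    show (k5 : ZMod 2) + (i2 + 1) + i3 + (1 + j2) = k5 + i2 + i3 + j2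
      from by revert k5 i2 i3 j2; decide,
    show (0 : ZMod 2) + 1 + 0 + (1 + j4) + k3 = 0 + 0 + j4 + k3 from by revert j4 k3; decide]
  apply theta_step
  rw [neg_one_pow_val_add, neg_one_pow_val_add]
  congr 1
  exact congrArg ZMod.val (by revert i1 i2 i3 k1 k2 k3 k4 k5 k6 j1 j2 j4; decide)
end
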